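/- arXiv:1312.1415 — 7 statements merged into one kernel-verified Lean document; each statement's English description precedes it below -/
import Mathlib

section
/- For every integer K ≥ 3, all real κ_1,…,κ_K and every nonzero complex number z, the determinant of M(z) equals (−1)^{K−1}(z^K + z^{−K} − 2)·∏_{i=1}^K κ_i. Equivalently, the constant coefficient of the characteristic polynomial is c_0 = −(z^K + z^{−K} − 2)∏_{i=1}^K κ_i. -/
/-- The `K × K` complex matrix `M(z)` of the periodic lattice diffusion operator:
rows/columns are indexed by `Fin K` (0-based, representing indices `1,…,K`);
`M_{i,i} = −(κ_{i−1} + κ_i)`, `M_{i,i+1} = M_{i+1,i} = κ_i`,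
`M_{1,K} = κ_K z^{−K}`, `M_{K,1} = κ_K z^{K}`, all other entries `0`. -/
noncomputable def diffMatrix (K : ℕ) (κ : ℕ → ℝ) (z : ℂ) :
    Matrix (Fin K) (Fin K) ℂ :=
  Matrix.of fun i j =>
    if i.val = j.val then -((κ i.val : ℂ) + (κ (i.val + 1) : ℂ))
    else if i.val + 1 = j.val then (κ (i.val + 1) : ℂ)
    else if j.val + 1 = i.val then (κ (j.val + 1) : ℂ)
    else if i.val = 0 ∧ j.val = K - 1 then (κ K : ℂ) * z⁻¹ ^ K
    else if i.val = K - 1 ∧ j.val = 0 then (κ K : ℂ) * z ^ K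
    else 0

/-!
Writing `∇_w` for the forward difference `(∇_w v)_i = v_{i+1} - v_i` with the twisted boundary
condition `v_K = w v_0`, the matrix factors as `M(z) = -∇_{z⁻ᴷ}ᵀ diag(κ_1, …, κ_K) ∇_{zᴷ}`.
Expanding along the first column, `det ∇_w = (-1)^K (1 - w)`, and
`(1 - z⁻ᴷ)(1 - zᴷ) = 2 - zᴷ - z⁻ᴷ`.
-/

open Matrix

variable {R : Type*} [CommRing R]

theorem Fin.val_sub_one_cases {n : ℕ} (i : Fin (n + 1)) :
    (i.val = 0 ∧ (i - 1).val = n) ∨ (i.val ≠ 0 ∧ (i - 1).val + 1 = i.val) := by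
  rw [Fin.coe_sub_one]
  split_ifs with h
  · simp [h]
  · have : i.val ≠ 0 := Fin.val_ne_iff.2 h
    omega

def cyclicBidiagonal {K : ℕ} (a b : Fin K → R) : Matrix (Fin K) (Fin K) R :=
  of fun i j =>
    if i.val = j.val then a i
    else if i.val + 1 = j.val ∨ (i.val = K - 1 ∧ j.val = 0) then b i
    else 0

theorem det_cyclicBidiagonal {n : ℕ} (a b : Fin (n + 2) → R) :
    (cyclicBidiagonal a b).det = ∏ i, a i + (-1) ^ (n + 1) * ∏ i, b i := by
  have upper : ((cyclicBidiagonal a b).submatrix (Fin.succAbove 0) Fin.succ).det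
      = ∏ i : Fin (n + 1), a i.succ := by
    rw [Fin.succAbove_zero, det_of_isUpperTriangular]
    · simp [cyclicBidiagonal]
    · intro i j (hji : j.val < i.val)
      simp only [cyclicBidiagonal, submatrix_apply, of_apply, Fin.val_succ]
      split_ifs <;> first | rfl | omega | (simp_all; omega)
  have lower : ((cyclicBidiagonal a b).submatrix (Fin.last _).succAbove Fin.succ).det
      = ∏ i : Fin (n + 1), b i.castSucc := by
    rw [Fin.succAbove_last, det_of_isLowerTriangular]
    · refine Finset.prod_congr rfl fun i _ => ?_
      simp only [cyclicBidiagonal, submatrix_apply, of_apply, Fin.val_succ, Fin.val_castSucc]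
      split_ifs <;> first | rfl | simp_all
    · intro i j (hij : i.val < j.val)
      simp only [cyclicBidiagonal, submatrix_apply, of_apply, Fin.val_succ, Fin.val_castSucc]
      split_ifs <;> first | rfl | omega
  have first_column (i : Fin (n + 2)) (h0 : i ≠ 0) (hl : i ≠ Fin.last _) :
      cyclicBidiagonal a b i 0 = 0 := by
    have h0 : i.val ≠ 0 := Fin.val_ne_iff.2 h0
    have hl : i.val ≠ n + 1 := Fin.val_ne_iff.2 hl
    simp only [cyclicBidiagonal, of_apply, Fin.val_zero]
    split_ifs <;> first | rfl | simp_all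
  have corner : cyclicBidiagonal a b (Fin.last _) 0 = b (Fin.last _) := by
    simp only [cyclicBidiagonal, of_apply, Fin.val_zero, Fin.val_last]
    split_ifs <;> first | rfl | simp_all
  rw [det_succ_column_zero, Finset.sum_eq_add_of_mem 0 (Fin.last (n + 1))
    (Finset.mem_univ _) (Finset.mem_univ _) (Fin.ext_iff.not.2 (by simp))
    (fun i _ hi => by rw [first_column i hi.1 hi.2, mul_zero, zero_mul]),
    upper, lower, corner, Fin.prod_univ_succ a, Fin.prod_univ_castSucc b]
  simp [cyclicBidiagonal]
  ring

theorem cyclicBidiagonal_transpose_mul_apply {m : Type*} {n : ℕ} (a b : Fin (n + 2) → R)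
    (A : Matrix (Fin (n + 2)) m R) (i : Fin (n + 2)) (j : m) :
    ((cyclicBidiagonal a b)ᵀ * A) i j = a i * A i j + b (i - 1) * A (i - 1) j := by
  have hpred := Fin.val_sub_one_cases i
  rw [mul_apply, Fintype.sum_eq_add i (i - 1) (Fin.val_ne_iff.1 (by omega))]
  · simp only [transpose_apply, cyclicBidiagonal, of_apply]
    split_ifs <;> first | rfl | omega
  · rintro k ⟨hki, hkp⟩
    have hki : k.val ≠ i.val := Fin.val_ne_iff.2 hki
    have hkp : k.val ≠ (i - 1).val := Fin.val_ne_iff.2 hkp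
    simp only [transpose_apply, cyclicBidiagonal, of_apply]
    split_ifs <;> first | simp | omega

def twistedDiff (K : ℕ) (w : R) : Matrix (Fin K) (Fin K) R :=
  cyclicBidiagonal (fun _ => -1) (fun i => if i.val = K - 1 then w else 1)

theorem det_twistedDiff {K : ℕ} (hK : 2 ≤ K) (w : R) :
    (twistedDiff K w).det = (-1) ^ K * (1 - w) := by
  obtain ⟨n, rfl⟩ : ∃ n, K = n + 2 := ⟨K - 2, by omega⟩
  rw [twistedDiff, det_cyclicBidiagonal, Fin.prod_const, Fin.prod_univ_castSucc]
  simp only [Fin.val_castSucc, Fin.val_last]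
  rw [Finset.prod_eq_one fun i _ => if_neg (by omega), if_pos (by omega)]
  ring

theorem diffMatrix_eq_neg_twistedDiff_transpose_mul {K : ℕ} (hK : 3 ≤ K) {κ : ℕ → ℝ}
    (hκ : κ 0 = κ K) {z : ℂ} (hz : z ≠ 0) :
    diffMatrix K κ z = -((twistedDiff K (z⁻¹ ^ K))ᵀ *
      (diagonal (fun i : Fin K => (κ (i.val + 1) : ℂ)) * twistedDiff K (z ^ K))) := by
  obtain ⟨n, rfl⟩ : ∃ n, K = n + 3 := ⟨K - 3, by omega⟩
  have hzK : z⁻¹ ^ (n + 3) * z ^ (n + 3) = 1 := by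
    rw [← mul_pow, inv_mul_cancel₀ hz, one_pow]
  ext i j
  rw [neg_apply, twistedDiff, cyclicBidiagonal_transpose_mul_apply, diagonal_mul, diagonal_mul]
  have hpred := Fin.val_sub_one_cases i
  generalize i - 1 = q at hpred ⊢
  simp only [twistedDiff, cyclicBidiagonal, diffMatrix, of_apply]
  split_ifs <;> first | omega | grind

/-- For every integer `K ≥ 3`, all real `κ_1,…,κ_K` (with `κ_0 = κ_K`) and every nonzero
complex `z`, `det M(z) = (−1)^{K−1} (z^K + z^{−K} − 2) ∏_{i=1}^K κ_i`; equivalently, the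
constant coefficient of the characteristic polynomial `det(λI − M(z))` is
`c_0 = −(z^K + z^{−K} − 2) ∏_{i=1}^K κ_i`. -/
theorem stmt0 (K : ℕ) (hK : 3 ≤ K) (κ : ℕ → ℝ) (hκ : κ 0 = κ K)
    (z : ℂ) (hz : z ≠ 0) :
    (diffMatrix K κ z).det
        = (-1) ^ (K - 1) * (z ^ K + z⁻¹ ^ K - 2) * ∏ i ∈ Finset.range K, (κ (i + 1) : ℂ)
    ∧ (diffMatrix K κ z).charpoly.coeff 0
        = -((z ^ K + z⁻¹ ^ K - 2) * ∏ i ∈ Finset.range K, (κ (i + 1) : ℂ)) := by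
  have hdet := diffMatrix_eq_neg_twistedDiff_transpose_mul hK hκ hz
  obtain ⟨n, rfl⟩ : ∃ n, K = n + 1 := ⟨K - 1, by omega⟩
  set P := ∏ i ∈ Finset.range (n + 1), (κ (i + 1) : ℂ)
  have hsign : ((-1 : ℂ) ^ n) * (-1) ^ n = 1 := by rw [← mul_pow]; norm_num
  have hzK : z⁻¹ ^ (n + 1) * z ^ (n + 1) = 1 := by
    rw [← mul_pow, inv_mul_cancel₀ hz, one_pow]
  replace hdet : (diffMatrix (n + 1) κ z).det
      = (-1) ^ n * (z ^ (n + 1) + z⁻¹ ^ (n + 1) - 2) * P := by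
    rw [hdet, det_neg, det_mul, det_mul, det_transpose, det_diagonal, det_twistedDiff (by omega),
      det_twistedDiff (by omega), Fintype.card_fin,
      Fin.prod_univ_eq_prod_range (fun i => (κ (i + 1) : ℂ))]
    linear_combination (z ^ (n + 1) + z⁻¹ ^ (n + 1) - 2) * P * (-1) ^ n * hsign
      - ((-1) ^ n) ^ 3 * P * hzK
  have hcharpoly := det_eq_sign_charpoly_coeff (diffMatrix (n + 1) κ z)
  rw [Fintype.card_fin, hdet] at hcharpoly
  refine ⟨by simpa using hdet, ?_⟩
  linear_combination (-1) ^ n * hcharpoly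
    - ((diffMatrix (n + 1) κ z).charpoly.coeff 0 + (z ^ (n + 1) + z⁻¹ ^ (n + 1) - 2) * P) * hsign
end

section
/- For every integer K ≥ 3, all real κ_1,…,κ_K and every nonzero complex z, the coefficient of λ^1 in det(λI − M(z)) equals c_1 = K·Σ_{j=1}^K ∏_{i≠j} κ_i. In particular, when all κ_i > 0 this equals K² κ_g^K / κ, where κ_g = (∏_{i=1}^K κ_i)^{1/K} is the geometric mean and κ = K(Σ_{i=1}^K 1/κ_i)^{−1} is the harmonic mean of the diffusivities. -/
/-!
With `w = z^K`, the matrix `-M(z)` factors as `(1 - T(w⁻¹))ᵀ D (1 - T(w))`, where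
`D = diag(κ_1, …, κ_K)` and `T(w)` is the cyclic shift whose wrap-around entry is `w`.
The coefficient of `λ` in `det(λ - M)` is `tr adj(-M)`, and the adjugate reverses products:
`adj(1 - T(w))` is the matrix `U(w)` with ones on and above the diagonal and `w` below it
(as `(1 - T(w)) U(w) = (1 - w) I` and `det(1 - T(w)) = 1 - w`), while `adj D = diag(∏_{i ≠ j} κ_i)`. Every diagonal entry of `U(w) adj(D) U(w⁻¹)ᵀ` equals
`∑_j ∏_{i ≠ j} κ_i`, because `w · w⁻¹ = 1`; summing the `K` of them gives the formula.
-/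

open Matrix Finset Polynomial Equiv

namespace Matrix

variable {n R : Type*} [Fintype n] [DecidableEq n] [CommRing R]

theorem adjugate_apply_self (B : Matrix n n R) (i : n) :
    adjugate B i i = ∑ σ : Perm n with σ i = i, Perm.sign σ • ∏ j ∈ univ.erase i, B (σ j) j := by
  rw [adjugate_apply, det_apply, sum_filter]
  refine sum_congr rfl fun σ _ => ?_
  split_ifs with hσ
  · rw [← mul_prod_erase _ _ (mem_univ i), hσ, updateRow_self, Pi.single_eq_same, one_mul]
    refine congrArg _ (prod_congr rfl fun j hj => ?_)
    rw [updateRow_ne fun h => ne_of_mem_erase hj (σ.injective (h.trans hσ.symm))]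
  · refine smul_eq_zero_of_right _ (prod_eq_zero (mem_univ (σ⁻¹ i)) ?_)
    rw [Perm.inv_def, apply_symm_apply, updateRow_self, Pi.single_eq_of_ne]
    exact fun h => hσ (σ.symm_apply_eq.mp h).symm

theorem charpoly_coeff_one (A : Matrix n n R) : A.charpoly.coeff 1 = trace (adjugate (-A)) := by
  have hcoeff : A.charpoly.coeff 1 = (derivative A.charpoly).eval 0 := by
    simp [← coeff_zero_eq_eval_zero, coeff_derivative]
  simp_rw [hcoeff, trace, diag_apply, adjugate_apply_self, sum_filter]
  rw [sum_comm, charpoly, det_apply, derivative_sum, eval_finsetSum]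
  refine sum_congr rfl fun σ _ => ?_
  rw [derivative_smul, derivative_prod_finset, eval_smul, eval_finsetSum, smul_sum]
  refine sum_congr rfl fun i _ => ?_
  by_cases h : σ i = i <;> simp [h, charmatrix_apply, diagonal_apply, eval_prod, apply_ite]

end Matrix

section TwistedShift

variable {R : Type*} [CommRing R]

def twistedShift (n : ℕ) (w : R) : Matrix (Fin (n + 1)) (Fin (n + 1)) R :=
  of fun i j => if j = i + 1 then (if i = Fin.last n then w else 1) else 0

def twistedUpperOnes (n : ℕ) (w : R) : Matrix (Fin (n + 1)) (Fin (n + 1)) R :=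
  of fun i j => if i ≤ j then 1 else w

variable {n : ℕ}

theorem twistedShift_mul_apply (w : R) (B : Matrix (Fin (n + 1)) (Fin (n + 1)) R)
    (i j : Fin (n + 1)) :
    (twistedShift n w * B) i j = (if i = Fin.last n then w else 1) * B (i + 1) j := by
  simp [twistedShift, mul_apply, ite_mul]

theorem one_sub_twistedShift_mul_twistedUpperOnes (w : R) :
    (1 - twistedShift n w) * twistedUpperOnes n w = (1 - w) • 1 := by
  ext i j
  rw [sub_mul, one_mul, Matrix.sub_apply, twistedShift_mul_apply, Matrix.smul_apply, one_apply]
  by_cases hi : i = Fin.last n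
  · subst hi
    by_cases hj : j = Fin.last n <;> simp [twistedUpperOnes, hj, Fin.last_le_iff, eq_comm]
  · have hsucc : i + 1 ≤ j ↔ i < j := by
      rw [Fin.le_def, Fin.lt_def, Fin.val_add_one, if_neg hi]; omega
    simp only [twistedUpperOnes, of_apply, hsucc, if_neg hi, one_mul]
    rcases lt_trichotomy i j with h | rfl | h
    · simp [h, h.le, h.ne]
    · simp
    · simp [not_le.mpr h, not_lt.mpr h.le, h.ne']

theorem det_one_sub_twistedShift (w : R) : det (1 - twistedShift n w) = 1 - w := by
  set A := 1 - twistedShift n (0 : R)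
  have hinv : A * twistedUpperOnes n 0 = 1 := by
    rw [one_sub_twistedShift_mul_twistedUpperOnes, sub_zero, one_smul]
  have hdetU : det (twistedUpperOnes n (0 : R)) = 1 := by
    rw [det_of_isUpperTriangular fun i j (hij : j < i) => by simp [twistedUpperOnes, hij.not_ge]]
    simp [twistedUpperOnes]
  have hdetA : det A = 1 := by simpa [hdetU] using congrArg det hinv
  have hadjA : adjugate A = twistedUpperOnes n 0 := by
    calc adjugate A = adjugate A * (A * twistedUpperOnes n 0) := by rw [hinv, mul_one]
      _ = twistedUpperOnes n 0 := by rw [← mul_assoc, adjugate_mul, hdetA, one_smul, one_mul]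
  -- the last row is the only one that depends on `w`, and it does so linearly
  have hrow : 1 - twistedShift n w =
      A.updateRow (Fin.last n) (A (Fin.last n) + (-w) • Pi.single 0 1) := by
    ext i j
    by_cases hi : i = Fin.last n <;> simp [A, twistedShift, hi, Pi.single_apply, sub_eq_add_neg]
  rw [hrow, det_updateRow_add, det_updateRow_smul, updateRow_eq_self, ← adjugate_apply, hadjA,
    hdetA]
  simp [twistedUpperOnes, sub_eq_add_neg]

theorem adjugate_one_sub_twistedShift (w : R) :
    adjugate (1 - twistedShift n w) = twistedUpperOnes n w := by
  -- for the generic `w = X` the determinant `1 - X` is a non-zero-divisor and can be cancelled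
  have hgeneric : adjugate (1 - twistedShift n (X : R[X])) = twistedUpperOnes n X := by
    set A := 1 - twistedShift n (X : R[X])
    have hreg : IsLeftRegular (det A) := by
      rw [det_one_sub_twistedShift, show (1 - X : R[X]) = -1 * (X - C 1) by simp]
      exact ((isUnit_one.neg).isRegular.mul (monic_X_sub_C 1).isRegular).left
    have h : det A • twistedUpperOnes n X = det A • adjugate A := by
      calc det A • twistedUpperOnes n X = adjugate A * A * twistedUpperOnes n X := by
            rw [adjugate_mul, smul_mul, one_mul]
        _ = det A • adjugate A := by
            rw [mul_assoc, one_sub_twistedShift_mul_twistedUpperOnes,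
              ← det_one_sub_twistedShift (n := n), Matrix.mul_smul, mul_one]
    exact Matrix.ext fun i j => (hreg (congrFun (congrFun h i) j)).symm
  have hT : (evalRingHom w).mapMatrix (1 - twistedShift n X) = 1 - twistedShift n w := by
    ext i j
    simp only [RingHom.mapMatrix_apply, map_apply, Matrix.sub_apply, twistedShift, of_apply,
      one_apply]
    split_ifs <;> simp
  have hU : (evalRingHom w).mapMatrix (twistedUpperOnes n X) = twistedUpperOnes n w := by
    ext i j
    simp only [RingHom.mapMatrix_apply, map_apply, twistedUpperOnes, of_apply]
    split_ifs <;> simp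
  rw [← hT, ← RingHom.map_adjugate, hgeneric, hU]

theorem trace_twistedUpperOnes_mul_diagonal_mul_transpose {w w' : R} (hw : w * w' = 1)
    (d : Fin (n + 1) → R) :
    trace (twistedUpperOnes n w * diagonal d * (twistedUpperOnes n w')ᵀ) =
      (n + 1) * ∑ i, d i := by
  have hdiag : ∀ i, (twistedUpperOnes n w * diagonal d * (twistedUpperOnes n w')ᵀ) i i =
      ∑ k, d k := by
    intro i
    rw [mul_apply]
    simp only [mul_diagonal, transpose_apply, twistedUpperOnes, of_apply]
    refine sum_congr rfl fun k _ => ?_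
    split_ifs
    · ring
    · linear_combination d k * hw
  simp [trace, hdiag]

theorem twistedShift_transpose_mul_diagonal_mul_twistedShift {w w' : R} (hw : w' * w = 1)
    (d : Fin (n + 1) → R) :
    (twistedShift n w')ᵀ * diagonal d * twistedShift n w = diagonal fun i => d (i - 1) := by
  ext i j
  rw [mul_apply]
  simp only [mul_diagonal, transpose_apply, twistedShift, of_apply, diagonal_apply]
  have hpred : ∀ k : Fin (n + 1), j = k + 1 ↔ k = j - 1 := fun k => by
    rw [eq_sub_iff_add_eq, eq_comm]
  simp only [hpred, ite_mul, zero_mul, mul_ite, mul_zero, sum_ite_eq', mem_univ, if_true,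
    sub_add_cancel]
  rcases eq_or_ne i j with rfl | hij
  · simp only [↓reduceIte]
    split_ifs
    · linear_combination d (i - 1) * hw
    · ring
  · simp [hij]

theorem one_sub_twistedShift_transpose_mul_diagonal_mul_apply {w w' : R} (hw : w' * w = 1)
    (d : Fin (n + 1) → R) (i j : Fin (n + 1)) :
    ((1 - twistedShift n w')ᵀ * (diagonal d * (1 - twistedShift n w)) :
      Matrix (Fin (n + 1)) (Fin (n + 1)) R) i j =
      (if i = j then d i + d (i - 1) else 0)
        - (if j = i + 1 then (if i = Fin.last n then w else 1) * d i else 0)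
        - (if i = j + 1 then (if j = Fin.last n then w' else 1) * d j else 0) := by
  have hexpand : (1 - twistedShift n w')ᵀ * (diagonal d * (1 - twistedShift n w)) =
      diagonal d - diagonal d * twistedShift n w - (twistedShift n w')ᵀ * diagonal d +
        (twistedShift n w')ᵀ * diagonal d * twistedShift n w := by
    simp only [transpose_sub, transpose_one, sub_mul, mul_sub, one_mul, mul_one, Matrix.mul_assoc]
    abel
  rw [hexpand, twistedShift_transpose_mul_diagonal_mul_twistedShift hw]
  simp [twistedShift, diagonal_apply]
  split_ifs <;> ring

end TwistedShift

theorem neg_diffMatrix_eq {n : ℕ} (hn : 2 ≤ n) {κ : ℕ → ℝ} (hκ : κ 0 = κ (n + 1)) {z : ℂ}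
    (hz : z ≠ 0) :
    -diffMatrix (n + 1) κ z = (1 - twistedShift n (z⁻¹ ^ (n + 1)))ᵀ *
      (diagonal (fun i : Fin (n + 1) => (κ (i + 1 : ℕ) : ℂ)) *
        (1 - twistedShift n (z ^ (n + 1)))) := by
  ext i j
  have hprev : κ ((if (i : ℕ) = 0 then n else (i : ℕ) - 1) + 1) = κ i := by
    split_ifs with h
    · rw [h, hκ]
    · congr 1; omega
  rw [one_sub_twistedShift_transpose_mul_diagonal_mul_apply
    (by rw [← mul_pow, inv_mul_cancel₀ hz, one_pow]), Matrix.neg_apply]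
  simp only [diffMatrix, of_apply, Fin.ext_iff, Fin.val_add_one, Fin.coe_sub_one, Fin.val_last,
    Fin.val_zero, hprev, Nat.add_sub_cancel]
  split_ifs <;> first | omega | ring1 | (simp only [*]; ring1)

theorem Fin.sum_prod_univ_erase_eq_sum_prod_range_erase {M : Type*} [CommSemiring M]
    (f : ℕ → M) (n : ℕ) :
    ∑ i : Fin n, ∏ j ∈ univ.erase i, f j = ∑ m ∈ range n, ∏ i ∈ (range n).erase m, f i := by
  rw [← Fin.sum_univ_eq_sum_range (fun m => ∏ i ∈ (range n).erase m, f i)]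
  refine sum_congr rfl fun i _ => ?_
  rw [← Nat.Iio_eq_range, ← Fin.map_valEmbedding_univ, ← Fin.valEmbedding_apply, ← map_erase,
    prod_map]

theorem prod_mul_sum_inv_eq_sum_prod_erase {ι K : Type*} [Field K] [DecidableEq ι]
    (s : Finset ι) {f : ι → K} (hf : ∀ i ∈ s, f i ≠ 0) :
    (∏ i ∈ s, f i) * ∑ i ∈ s, (f i)⁻¹ = ∑ j ∈ s, ∏ i ∈ s.erase j, f i := by
  rw [mul_sum]
  refine sum_congr rfl fun j hj => ?_
  rw [← mul_prod_erase s f hj, mul_comm (f j), mul_assoc, mul_inv_cancel₀ (hf j hj), mul_one]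

/-- For every integer `K ≥ 3`, all real `κ_1,…,κ_K` (with `κ_0 = κ_K`) and every nonzero
complex `z`, the coefficient of `λ^1` in `det(λI − M(z))` is
`c_1 = K ∑_{j=1}^K ∏_{i ≠ j} κ_i`.  In particular, when all `κ_i > 0` this equals
`K² κ_g^K / κ`, where `κ_g = (∏_{i=1}^K κ_i)^{1/K}` is the geometric mean and
`κ = K (∑_{i=1}^K 1/κ_i)⁻¹` is the harmonic mean of the diffusivities. -/
theorem stmt2 (K : ℕ) (hK : 3 ≤ K) (κ : ℕ → ℝ) (hκ : κ 0 = κ K)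
    (z : ℂ) (hz : z ≠ 0) :
    (diffMatrix K κ z).charpoly.coeff 1
        = (K : ℂ) * ∑ j ∈ Finset.range K,
            ∏ i ∈ (Finset.range K).erase j, (κ (i + 1) : ℂ)
    ∧ ((∀ i ∈ Finset.range K, 0 < κ (i + 1)) →
        (diffMatrix K κ z).charpoly.coeff 1
          = (((K : ℝ) ^ 2 *
                ((∏ i ∈ Finset.range K, κ (i + 1)) ^ ((1 : ℝ) / K)) ^ K /
                ((K : ℝ) * (∑ i ∈ Finset.range K, (κ (i + 1))⁻¹)⁻¹) : ℝ) : ℂ)) := by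
  obtain ⟨n, rfl⟩ : ∃ n, K = n + 1 := ⟨K - 1, by omega⟩
  have hw : z ^ (n + 1) * z⁻¹ ^ (n + 1) = 1 := by rw [← mul_pow, mul_inv_cancel₀ hz, one_pow]
  have hcoeff : (diffMatrix (n + 1) κ z).charpoly.coeff 1 = ((n + 1 : ℕ) : ℂ) *
      ∑ j ∈ range (n + 1), ∏ i ∈ (range (n + 1)).erase j, (κ (i + 1) : ℂ) := by
    rw [charpoly_coeff_one, neg_diffMatrix_eq (by omega) hκ hz, adjugate_mul_distrib,
      adjugate_mul_distrib, ← adjugate_transpose, adjugate_one_sub_twistedShift,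
      adjugate_one_sub_twistedShift, adjugate_diagonal,
      trace_twistedUpperOnes_mul_diagonal_mul_transpose hw,
      Fin.sum_prod_univ_erase_eq_sum_prod_range_erase (fun i => (κ (i + 1) : ℂ))]
    push_cast
    rfl
  refine ⟨hcoeff, fun hpos => ?_⟩
  have hpow : ((∏ i ∈ range (n + 1), κ (i + 1)) ^ ((1 : ℝ) / (n + 1 : ℕ))) ^ (n + 1) =
      ∏ i ∈ range (n + 1), κ (i + 1) := by
    rw [← Real.rpow_natCast, ← Real.rpow_mul (prod_pos hpos).le, one_div,
      inv_mul_cancel₀ (by positivity), Real.rpow_one]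
  have hS : (∑ i ∈ range (n + 1), (κ (i + 1) : ℂ)⁻¹) ≠ 0 := by
    exact_mod_cast (sum_pos (fun i hi => inv_pos.mpr (hpos i hi)) nonempty_range_add_one).ne'
  rw [hcoeff, hpow, ← prod_mul_sum_inv_eq_sum_prod_erase _ fun i hi => by
    exact_mod_cast (hpos i hi).ne']
  push_cast
  field_simp
end

section
/- For every integer K ≥ 3, all real κ_1,…,κ_K and every nonzero complex z, the coefficient of λ^2 in det(λI − M(z)) equals c_2 = (1/2) Σ_{m_1=1}^{K} Σ_{m_2=1}^{K−1} m_2 (K − m_2) ∏_{i ∉ {m_1, m_1+m_2 mod K}} κ_i, where the product runs over all indices i ∈ {1,…,K} (taken mod K) other than m_1 and m_1+m_2. -/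
open Finset Matrix

section Path

variable {R : Type*} [CommRing R]

def pathLaplacian (a b w : ℕ → R) (n : ℕ) : Matrix (Fin n) (Fin n) R :=
  Matrix.of fun i j =>
    if (i : ℕ) = j then w i + w (i + 1)
    else if (i : ℕ) + 1 = j then -a j
    else if (j : ℕ) + 1 = i then -b i
    else 0

lemma pathLaplacian_submatrix_succ (a b w : ℕ → R) (n : ℕ) :
    (pathLaplacian a b w (n + 1)).submatrix Fin.succ Fin.succ =
      pathLaplacian (a ∘ (· + 1)) (b ∘ (· + 1)) (w ∘ (· + 1)) n := by
  ext i j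
  simp [pathLaplacian]

lemma det_pathLaplacian_add_two (a b w : ℕ → R) (n : ℕ) :
    (pathLaplacian a b w (n + 2)).det =
      (w 0 + w 1) * (pathLaplacian (a ∘ (· + 1)) (b ∘ (· + 1)) (w ∘ (· + 1)) (n + 1)).det -
        a 1 * b 1 * (pathLaplacian (a ∘ (· + 2)) (b ∘ (· + 2)) (w ∘ (· + 2)) n).det := by
  set P := pathLaplacian a b w (n + 2)
  have hminor : (P.submatrix Fin.succ (Fin.succAbove 1)).det =
      -b 1 * (pathLaplacian (a ∘ (· + 2)) (b ∘ (· + 2)) (w ∘ (· + 2)) n).det := by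
    have hsub : (P.submatrix Fin.succ (Fin.succAbove 1)).submatrix (Fin.succAbove 0) Fin.succ =
        pathLaplacian (a ∘ (· + 2)) (b ∘ (· + 2)) (w ∘ (· + 2)) n := by
      ext i j
      simp [P, pathLaplacian, Fin.succAbove, Fin.lt_def]
    rw [det_succ_column_zero, Fin.sum_univ_succ, hsub]
    simp [P, pathLaplacian]
  rw [det_succ_row_zero, Fin.sum_univ_succ, Fin.sum_univ_succ, Fin.succAbove_zero,
    Fin.succ_zero_eq_one, hminor,
    show P.submatrix Fin.succ Fin.succ = _ from pathLaplacian_submatrix_succ a b w (n + 1)]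
  simp [P, pathLaplacian]
  ring

def sumProdOmitOne (w : ℕ → R) (m : ℕ) : R :=
  ∑ t ∈ range m, ∏ s ∈ range m, if s = t then 1 else w s

lemma sumProdOmitOne_succ (w : ℕ → R) (m : ℕ) :
    sumProdOmitOne w (m + 1) =
      w 0 * sumProdOmitOne (w ∘ (· + 1)) m + ∏ s ∈ range m, w (s + 1) := by
  simp only [sumProdOmitOne, sum_range_succ', prod_range_succ', mul_sum]
  simp [mul_comm]

theorem det_pathLaplacian :
    ∀ (n : ℕ) (a b w : ℕ → R), (∀ t, a t * b t = w t * w t) →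
      (pathLaplacian a b w n).det = sumProdOmitOne w (n + 1)
  | 0, _, _, _, _ => by simp [sumProdOmitOne]
  | 1, _, _, w, _ => by
    simp [pathLaplacian, sumProdOmitOne, sum_range_succ, prod_range_succ, add_comm]
  | n + 2, a, b, w, hab => by
    rw [det_pathLaplacian_add_two, det_pathLaplacian (n + 1) (a ∘ (· + 1)) (b ∘ (· + 1))
      (w ∘ (· + 1)) fun t => hab (t + 1), det_pathLaplacian n (a ∘ (· + 2)) (b ∘ (· + 2))
      (w ∘ (· + 2)) fun t => hab (t + 2), hab 1, sumProdOmitOne_succ w (n + 2),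
      sumProdOmitOne_succ _ (n + 1), prod_range_succ' _ (n + 1)]
    simp only [Function.comp_def, add_assoc]
    ring

lemma sumProdOmitOne_mul_sumProdOmitOne (V : ℕ → R) (m n : ℕ) :
    sumProdOmitOne V m * sumProdOmitOne (fun s => V (m + s)) n =
      ∑ t₁ ∈ range m, ∑ t₂ ∈ range n,
        ∏ s ∈ range (m + n), if s = t₁ ∨ s = m + t₂ then 1 else V s := by
  rw [sumProdOmitOne, sumProdOmitOne, sum_mul_sum]
  refine sum_congr rfl fun t₁ ht₁ => sum_congr rfl fun t₂ _ => ?_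
  rw [mem_range] at ht₁
  rw [prod_range_add]
  congr 1
  · refine prod_congr rfl fun s hs => ?_
    rw [mem_range] at hs
    simp only [show s ≠ m + t₂ by omega, or_false]
  · refine prod_congr rfl fun s _ => ?_
    simp only [show m + s ≠ t₁ by omega, false_or, Nat.add_left_cancel_iff]

end Path

section Pairs

variable {α M : Type*} [Fintype α] [DecidableEq α] [AddCommMonoid M]

lemma sum_sum_erase_pair_eq_two_nsmul (f : Finset α → M) :
    ∑ x, ∑ y ∈ univ.erase x, f {x, y} = 2 • ∑ s ∈ powersetCard 2 univ, f s := by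
  have h2 : ∀ s ∈ powersetCard 2 (univ : Finset α), 2 • f s = ∑ x ∈ s, f s := by
    intro s hs
    rw [sum_const, (mem_powersetCard.1 hs).2]
  rw [smul_sum, sum_congr rfl h2,
    sum_comm' (t' := univ) (s' := fun x => (powersetCard 2 univ).filter (x ∈ ·)) (by simp)]
  refine sum_congr rfl fun x _ => sum_nbij (fun y => {x, y}) ?_ ?_ ?_ fun _ _ => rfl
  · intro y hy
    simp [card_pair (mem_erase.1 hy).1.symm]
  · intro y hy y' hy' h
    have : y ∈ ({x, y'} : Finset α) := by
      rw [← show ({x, y} : Finset α) = {x, y'} from h]; simp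
    simpa [(mem_erase.1 hy).1] using this
  · intro s hs
    simp only [coe_filter, mem_powersetCard, subset_univ, true_and, Set.mem_ofPred_eq] at hs
    obtain ⟨a, b, hab, rfl⟩ := card_eq_two.1 hs.1
    rcases mem_insert.1 hs.2 with rfl | h
    · exact ⟨b, by simpa using hab.symm, rfl⟩
    · rw [mem_singleton] at h; subst h
      exact ⟨a, by simpa using hab, pair_comm _ _⟩

lemma two_nsmul_sum_powersetCard_card_sub_two (h : 2 ≤ Fintype.card α) (f : Finset α → M) :
    2 • ∑ s ∈ powersetCard (Fintype.card α - 2) univ, f s =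
      ∑ x, ∑ y ∈ univ.erase x, f {x, y}ᶜ := by
  rw [sum_sum_erase_pair_eq_two_nsmul (fun s => f sᶜ)]
  congr 1
  refine sum_nbij' compl compl ?_ ?_ (fun s _ => compl_compl s) (fun s _ => compl_compl s)
    (fun s _ => by rw [compl_compl])
  all_goals
    intro s hs
    simp only [mem_powersetCard, subset_univ, true_and, card_compl] at hs ⊢
    omega

end Pairs

lemma submatrix_sum_elim_eq_fromBlocks {ι α β R : Type*} (A : Matrix ι ι R) (f₁ : α → ι)
    (f₂ : β → ι) :
    A.submatrix (Sum.elim f₁ f₂) (Sum.elim f₁ f₂) =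
      fromBlocks (A.submatrix f₁ f₁) (A.submatrix f₁ f₂) (A.submatrix f₂ f₁)
        (A.submatrix f₂ f₂) := by
  ext (i | i) (j | j) <;> rfl

lemma coeff_charpoly_neg_eq_sum_minors {R n : Type*} [CommRing R] [Fintype n] [DecidableEq n]
    (A : Matrix n n R) {k : ℕ} (hk : k ≤ Fintype.card n) :
    (-A).charpoly.coeff k = ∑ s ∈ powersetCard (Fintype.card n - k) univ,
      (A.submatrix (Subtype.val : s → n) Subtype.val).det := by
  have h := charpoly_coeff_eq_sum_minors (-A) (Fintype.card n - k) (Nat.sub_le _ _)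
  rw [Nat.sub_sub_self hk] at h
  rw [h, mul_sum]
  refine sum_congr rfl fun s hs => ?_
  rw [show (-A).submatrix (Subtype.val : s → n) Subtype.val = -A.submatrix Subtype.val Subtype.val
    from rfl, det_neg, Fintype.card_coe, (mem_powersetCard.1 hs).2, ← mul_assoc,
    ← mul_pow, neg_one_mul, neg_neg, one_pow, one_mul]

lemma sum_Icc_sum_range_sum_range_eq_sum_nsmul {M : Type*} [AddCommMonoid M] (K : ℕ)
    (G : ℕ → M) :
    ∑ d ∈ Icc 1 (K - 1), ∑ t₁ ∈ range d, ∑ t₂ ∈ range (K - d), G (d + t₂ - t₁) =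
      ∑ m ∈ Icc 1 (K - 1), (m * (K - m)) • G m := by
  have hcount : ∀ m, (m * (K - m)) • G m = ∑ i ∈ range (K - m), ∑ j ∈ range m, G m := by
    intro m
    simp [sum_const, card_range, smul_smul, mul_comm]
  simp_rw [hcount]
  rw [← sum_congr rfl fun d _ =>
      sum_product' (range d) (range (K - d)) fun t₁ t₂ => G (d + t₂ - t₁),
    ← sum_congr rfl fun m _ => sum_product' (range (K - m)) (range m) fun _ _ => G m,
    sum_sigma' (Icc 1 (K - 1)) (fun d => range d ×ˢ range (K - d)) fun d p => G (d + p.2 - p.1),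
    sum_sigma' (Icc 1 (K - 1)) (fun m => range (K - m) ×ˢ range m) fun m _ => G m]
  refine sum_nbij' (fun p => ⟨p.1 + p.2.2 - p.2.1, p.2⟩)
    (fun p => ⟨p.1 + p.2.1 - p.2.2, p.2⟩) ?_ ?_ ?_ ?_ fun _ _ => rfl
  all_goals
    rintro ⟨d, t₁, t₂⟩ h
    simp only [mem_sigma, mem_Icc, mem_product, mem_range] at h ⊢
    try simp only [Sigma.mk.injEq, heq_eq_eq, and_true]
    omega

section Cycle

open Fin.NatCast

variable {K : ℕ} [NeZero K]

lemma Fin.natCast_inj_of_lt {ℓ ℓ' : ℕ} (h : ℓ < K) (h' : ℓ' < K) :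
    (ℓ : Fin K) = ℓ' ↔ ℓ = ℓ' := by
  simp [Fin.ext_iff, Nat.mod_eq_of_lt h, Nat.mod_eq_of_lt h']

lemma Fin.self_ne_add_natCast (x : Fin K) {ℓ : ℕ} (h0 : 0 < ℓ) (h : ℓ < K) :
    x ≠ x + ℓ := by
  rw [ne_eq, left_eq_add, Fin.natCast_eq_zero]
  exact fun hdvd => absurd (Nat.le_of_dvd h0 hdvd) (by omega)

@[to_additive]
lemma Fin.prod_range_add_natCast {M : Type*} [CommMonoid M] (v : Fin K) (f : Fin K → M) :
    ∏ s ∈ range K, f (v + s) = ∏ x, f x := by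
  rw [← Fin.prod_univ_eq_prod_range (fun s => f (v + s)) K]
  simp only [Fin.cast_val_eq_self]
  exact Fintype.prod_equiv (Equiv.addLeft v) _ _ fun _ => rfl

@[to_additive]
lemma Fin.prod_Icc_natCast {M : Type*} [CommMonoid M] (f : Fin K → M) :
    ∏ i ∈ Icc 1 K, f i = ∏ x, f x := by
  rw [← Finset.Ico_add_one_right_eq_Icc, prod_Ico_eq_prod_range, Nat.add_sub_cancel]
  simp only [Nat.cast_add]
  exact Fin.prod_range_add_natCast _ f

lemma Fin.sum_erase_eq_sum_Icc {M : Type*} [AddCommMonoid M] (x : Fin K) (f : Fin K → M) :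
    ∑ y ∈ univ.erase x, f y = ∑ d ∈ Icc 1 (K - 1), f (x + d) := by
  refine sum_nbij' (fun y => (y - x).val) (fun d => x + d) ?_ ?_ ?_ ?_ fun _ _ => by simp
  · intro y hy
    have : (y - x).val ≠ 0 := by
      rw [ne_eq, Fin.val_eq_zero_iff, sub_eq_zero]; exact (mem_erase.1 hy).1
    rw [mem_Icc]; omega
  · intro d hd
    rw [mem_Icc] at hd
    simpa using (Fin.self_ne_add_natCast x (by omega) (by omega)).symm
  · intro y _
    simp
  · intro d hd
    rw [mem_Icc] at hd
    simp [Nat.mod_eq_of_lt (show d < K by omega)]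

lemma Fin.prod_range_ite_eq_prod_filter {M : Type*} [CommMonoid M] (v : Fin K) (f : Fin K → M)
    {t₁ t₂ : ℕ} (h₁ : t₁ < K) (h₂ : t₂ < K) :
    ∏ s ∈ range K, (if s = t₁ ∨ s = t₂ then 1 else f (v + s)) =
      ∏ x ∈ univ.filter (fun x => x ≠ v + t₁ ∧ x ≠ v + t₂), f x := by
  rw [prod_filter, ← Fin.prod_range_add_natCast v]
  refine prod_congr rfl fun s hs => ?_
  rw [mem_range] at hs
  simp only [ne_eq, add_right_inj, Fin.natCast_inj_of_lt hs h₁, Fin.natCast_inj_of_lt hs h₂,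
    ← not_or, ite_not]

def cycleArc (v : Fin K) (n : ℕ) (s : Fin n) : Fin K := v + (s : ℕ)

-- The vertices other than `u` and `u + d`, listed along the cycle.
def cycleArcs (u : Fin K) (d : ℕ) : Fin (d - 1) ⊕ Fin (K - d - 1) → Fin K :=
  Sum.elim (cycleArc (u + 1) (d - 1)) (cycleArc (u + d + 1 : Fin K) (K - d - 1))

lemma det_submatrix_compl_pair_eq {R : Type*} [CommRing R] (A : Matrix (Fin K) (Fin K) R)
    (u : Fin K) {d : ℕ} (hd : 0 < d) (hdK : d < K) :
    (A.submatrix (Subtype.val : (({u, u + d}ᶜ : Finset (Fin K)) : Type) → Fin K)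
        Subtype.val).det = (A.submatrix (cycleArcs u d) (cycleArcs u d)).det := by
  set off : Fin (d - 1) ⊕ Fin (K - d - 1) → ℕ :=
    Sum.elim (fun s => s + 1) (fun t => d + 1 + t)
  have hoff : ∀ x, 0 < off x ∧ off x < K ∧ off x ≠ d := by
    rintro (⟨s, hs⟩ | ⟨t, ht⟩) <;> simp only [off, Sum.elim_inl, Sum.elim_inr] <;> omega
  have hoff_inj : Function.Injective off := by
    rintro (⟨s, hs⟩ | ⟨t, ht⟩) (⟨s', hs'⟩ | ⟨t', ht'⟩) h <;>
      simp only [off, Sum.elim_inl, Sum.elim_inr] at h <;> first | omega | simp; omega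
  have harcs : cycleArcs u d = fun x => u + (off x : Fin K) := by
    funext x
    rcases x with s | t <;>
      simp only [cycleArcs, cycleArc, off, Sum.elim_inl, Sum.elim_inr] <;> push_cast <;> abel
  have hmem : ∀ x, u + (off x : Fin K) ∈ ({u, u + d}ᶜ : Finset (Fin K)) := by
    intro x
    obtain ⟨h0, hK, hd'⟩ := hoff x
    simp only [mem_compl, mem_insert, mem_singleton, not_or]
    refine ⟨(Fin.self_ne_add_natCast u h0 hK).symm, ?_⟩
    rwa [add_right_inj, Fin.natCast_inj_of_lt hK hdK]
  have hinj : Function.Injective fun x => (⟨u + (off x : Fin K), hmem x⟩ :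
      (({u, u + d}ᶜ : Finset (Fin K)) : Type)) := by
    intro x y h
    simp only [Subtype.mk.injEq, add_right_inj] at h
    exact hoff_inj ((Fin.natCast_inj_of_lt (hoff x).2.1 (hoff y).2.1).1 h)
  have hcard : Fintype.card (Fin (d - 1) ⊕ Fin (K - d - 1)) =
      Fintype.card (({u, u + d}ᶜ : Finset (Fin K)) : Type) := by
    rw [Fintype.card_coe, card_compl, card_pair (Fin.self_ne_add_natCast u hd hdK)]
    simp; omega
  let e := Equiv.ofBijective _ ((Fintype.bijective_iff_injective_and_card _).2 ⟨hinj, hcard⟩)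
  rw [← det_submatrix_equiv_self e, submatrix_submatrix, harcs]
  rfl

lemma exists_cycleArc_eq_add_natCast (u : Fin K) {d : ℕ} (s : Fin (d - 1))
    (t : Fin (K - d - 1)) :
    ∃ ℓ, 2 ≤ ℓ ∧ ℓ + 2 ≤ K ∧
      cycleArc (u + d + 1 : Fin K) (K - d - 1) t = (cycleArc (u + 1) (d - 1) s : Fin K) + ℓ := by
  obtain ⟨s, hs⟩ := s
  obtain ⟨t, ht⟩ := t
  obtain ⟨ℓ, hℓ⟩ : ∃ ℓ, d + t = s + ℓ := ⟨d + t - s, by omega⟩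
  refine ⟨ℓ, by omega, by omega, ?_⟩
  calc cycleArc (u + d + 1 : Fin K) (K - d - 1) ⟨t, ht⟩ = u + 1 + ((d + t : ℕ) : Fin K) := by
        simp only [cycleArc]; push_cast; abel
    _ = (cycleArc (u + 1) (d - 1) ⟨s, hs⟩ : Fin K) + ℓ := by
        rw [hℓ, Nat.cast_add, ← add_assoc]; rfl

variable {R : Type*} [CommRing R]

-- `w x` weighs the edge `{x - 1, x}`; its entries above and below the diagonal are `-a x`, `-b x`.
def cycleLaplacian (a b w : Fin K → R) : Matrix (Fin K) (Fin K) R :=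
  Matrix.of fun x y =>
    if x = y then w x + w (x + 1)
    else if y = x + 1 then -a y
    else if x = y + 1 then -b x
    else 0

variable (a b w : Fin K → R)

lemma cycleLaplacian_apply_self (x : Fin K) : cycleLaplacian a b w x x = w x + w (x + 1) := by
  simp [cycleLaplacian]

lemma cycleLaplacian_apply_add_one (hK : 2 ≤ K) (x : Fin K) :
    cycleLaplacian a b w x (x + 1) = -a (x + 1) := by
  have := Fin.self_ne_add_natCast x one_pos hK
  simp_all [cycleLaplacian]

lemma cycleLaplacian_add_one_apply (hK : 3 ≤ K) (x : Fin K) :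
    cycleLaplacian a b w (x + 1) x = -b (x + 1) := by
  have h1 := Fin.self_ne_add_natCast x one_pos (by omega)
  have h2 := Fin.self_ne_add_natCast x two_pos hK
  rw [Nat.cast_one] at h1
  rw [Nat.cast_ofNat, ← one_add_one_eq_two, ← add_assoc] at h2
  simp [cycleLaplacian, h1.symm, h2]

lemma cycleLaplacian_apply_add_natCast (x : Fin K) {ℓ : ℕ} (h2 : 2 ≤ ℓ)
    (hK : ℓ + 2 ≤ K) :
    cycleLaplacian a b w x (x + ℓ) = 0 := by
  have h1 := Fin.self_ne_add_natCast x (ℓ := ℓ) (by omega) (by omega)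
  have h3 := Fin.self_ne_add_natCast x (ℓ := ℓ + 1) (by omega) (by omega)
  have h4 : (ℓ : Fin K) ≠ 1 := by
    rw [← Nat.cast_one, ne_eq, Fin.natCast_inj_of_lt (by omega) (by omega)]; omega
  rw [Nat.cast_succ, ← add_assoc] at h3
  simp [cycleLaplacian, h1, h3, h4]

lemma cycleLaplacian_add_natCast_apply (x : Fin K) {ℓ : ℕ} (h2 : 2 ≤ ℓ)
    (hK : ℓ + 2 ≤ K) :
    cycleLaplacian a b w (x + ℓ) x = 0 := by
  have hx : x = x + ℓ + (K - ℓ : ℕ) := by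
    rw [add_assoc, ← Nat.cast_add, Nat.add_sub_cancel' (by omega), Fin.natCast_self, add_zero]
  have := cycleLaplacian_apply_add_natCast a b w (x + ℓ) (ℓ := K - ℓ) (by omega) (by omega)
  rwa [← hx] at this

lemma cycleLaplacian_submatrix_cycleArc (hK : 3 ≤ K) (v : Fin K) {n : ℕ} (hn : n < K) :
    (cycleLaplacian a b w).submatrix (cycleArc v n) (cycleArc v n) =
      pathLaplacian (fun s => a (v + s)) (fun s => b (v + s)) (fun s => w (v + s)) n := by
  ext ⟨s, hs⟩ ⟨t, ht⟩
  simp only [submatrix_apply, cycleArc, pathLaplacian, of_apply]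
  rcases lt_trichotomy s t with hst | rfl | hst
  · obtain ⟨ℓ, rfl⟩ := Nat.exists_eq_add_of_lt hst
    rw [if_neg (by omega)]
    rcases ℓ with _ | ℓ
    · rw [if_pos rfl, Nat.cast_succ, ← add_assoc, cycleLaplacian_apply_add_one a b w (by omega)]
    · rw [if_neg (by omega), if_neg (by omega), show s + (ℓ + 1) + 1 = s + (ℓ + 2) by omega,
        Nat.cast_add, ← add_assoc]
      exact cycleLaplacian_apply_add_natCast a b w _ (by omega) (by omega)
  · rw [if_pos rfl, cycleLaplacian_apply_self, Nat.cast_succ, add_assoc]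
  · obtain ⟨ℓ, rfl⟩ := Nat.exists_eq_add_of_lt hst
    rw [if_neg (by omega), if_neg (by omega)]
    rcases ℓ with _ | ℓ
    · rw [if_pos rfl, Nat.cast_succ, ← add_assoc, cycleLaplacian_add_one_apply a b w hK]
    · rw [if_neg (by omega), show t + (ℓ + 1) + 1 = t + (ℓ + 2) by omega,
        Nat.cast_add, ← add_assoc]
      exact cycleLaplacian_add_natCast_apply a b w _ (by omega) (by omega)

theorem det_cycleLaplacian_submatrix_compl_pair (hK : 3 ≤ K)
    (hab : ∀ x, a x * b x = w x * w x) (u : Fin K) {d : ℕ} (hd : 0 < d) (hdK : d < K) :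
    ((cycleLaplacian a b w).submatrix
        (Subtype.val : (({u, u + d}ᶜ : Finset (Fin K)) : Type) → Fin K) Subtype.val).det =
      sumProdOmitOne (fun s => w (u + 1 + s)) d *
        sumProdOmitOne (fun s => w (u + d + 1 + s)) (K - d) := by
  have hcross : (cycleLaplacian a b w).submatrix (cycleArc (u + 1) (d - 1))
      (cycleArc (u + d + 1 : Fin K) (K - d - 1)) = 0 := by
    ext s t
    obtain ⟨ℓ, h2, hK', h⟩ := exists_cycleArc_eq_add_natCast u s t
    rw [submatrix_apply, h, Matrix.zero_apply]
    exact cycleLaplacian_apply_add_natCast a b w _ h2 hK'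
  rw [det_submatrix_compl_pair_eq _ u hd hdK, cycleArcs, submatrix_sum_elim_eq_fromBlocks,
    hcross, det_fromBlocks_zero₁₂, cycleLaplacian_submatrix_cycleArc a b w hK _ (by omega),
    cycleLaplacian_submatrix_cycleArc a b w hK _ (by omega),
    det_pathLaplacian _ _ _ _ fun _ => hab _, det_pathLaplacian _ _ _ _ fun _ => hab _,
    Nat.sub_add_cancel hd, Nat.sub_add_cancel (show 1 ≤ K - d by omega)]

lemma Fin.sum_sum_Icc_sum_range_sum_range_eq_sum_nsmul {M : Type*} [AddCommMonoid M]
    (H : Fin K → Fin K → M) :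
    ∑ u, ∑ d ∈ Icc 1 (K - 1), ∑ t₁ ∈ range d, ∑ t₂ ∈ range (K - d),
        H (u + 1 + t₁) (u + 1 + (d + t₂ : ℕ)) =
      ∑ x, ∑ m ∈ Icc 1 (K - 1), (m * (K - m)) • H x (x + m) := by
  calc _ = ∑ d ∈ Icc 1 (K - 1), ∑ t₁ ∈ range d, ∑ t₂ ∈ range (K - d), ∑ u,
        H (u + 1 + t₁) (u + 1 + (d + t₂ : ℕ)) := by
        rw [sum_comm]
        refine sum_congr rfl fun d _ => ?_
        rw [sum_comm]
        exact sum_congr rfl fun _ _ => sum_comm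
    _ = ∑ d ∈ Icc 1 (K - 1), ∑ t₁ ∈ range d, ∑ t₂ ∈ range (K - d), ∑ x,
        H x (x + (d + t₂ - t₁ : ℕ)) := by
        refine sum_congr rfl fun d _ => sum_congr rfl fun t₁ ht₁ =>
          sum_congr rfl fun t₂ _ => ?_
        refine Fintype.sum_equiv (Equiv.addRight (1 + t₁ : Fin K)) _ _ fun u => ?_
        rw [mem_range] at ht₁
        obtain ⟨ℓ, hℓ⟩ : ∃ ℓ, d + t₂ = t₁ + ℓ := ⟨d + t₂ - t₁, by omega⟩
        rw [hℓ, Nat.add_sub_cancel_left]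
        simp only [Equiv.coe_addRight, Nat.cast_add, add_assoc]
    _ = ∑ x, ∑ d ∈ Icc 1 (K - 1), ∑ t₁ ∈ range d, ∑ t₂ ∈ range (K - d),
        H x (x + (d + t₂ - t₁ : ℕ)) := by
        symm
        rw [sum_comm]
        refine sum_congr rfl fun d _ => ?_
        rw [sum_comm]
        exact sum_congr rfl fun _ _ => sum_comm
    _ = _ := sum_congr rfl fun x _ =>
        sum_Icc_sum_range_sum_range_eq_sum_nsmul K fun m => H x (x + m)

theorem two_nsmul_coeff_two_charpoly_neg_cycleLaplacian (hK : 3 ≤ K)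
    (hab : ∀ x, a x * b x = w x * w x) :
    2 • (-cycleLaplacian a b w).charpoly.coeff 2 =
      ∑ x, ∑ m ∈ Icc 1 (K - 1), (m * (K - m)) •
        ∏ y ∈ univ.filter (fun y => y ≠ x ∧ y ≠ x + (m : Fin K)), w y := by
  have hcard : 2 ≤ Fintype.card (Fin K) := by rw [Fintype.card_fin]; omega
  rw [coeff_charpoly_neg_eq_sum_minors _ hcard, two_nsmul_sum_powersetCard_card_sub_two hcard]
  simp_rw [Fin.sum_erase_eq_sum_Icc]
  rw [← Fin.sum_sum_Icc_sum_range_sum_range_eq_sum_nsmul fun p q =>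
    ∏ y ∈ univ.filter (fun y => y ≠ p ∧ y ≠ q), w y]
  refine sum_congr rfl fun u _ => sum_congr rfl fun d hd => ?_
  rw [mem_Icc] at hd
  have hshift : (fun s : ℕ => w (u + d + 1 + s)) = fun s => w (u + 1 + (d + s : ℕ)) := by
    funext s; push_cast; abel_nf
  rw [det_cycleLaplacian_submatrix_compl_pair a b w hK hab u (by omega) (by omega), hshift,
    sumProdOmitOne_mul_sumProdOmitOne (fun s => w (u + 1 + s)), Nat.add_sub_cancel' (by omega)]
  refine sum_congr rfl fun t₁ ht₁ => sum_congr rfl fun t₂ ht₂ => ?_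
  rw [mem_range] at ht₁ ht₂
  exact Fin.prod_range_ite_eq_prod_filter _ _ (by omega) (by omega)

lemma prod_filter_Icc_mod {M : Type*} [CommMonoid M] (f : ℕ → M) (hf : f 0 = f K) (p q : ℕ) :
    ∏ i ∈ (Icc 1 K).filter (fun i => i % K ≠ p % K ∧ i % K ≠ q % K), f i =
      ∏ y ∈ univ.filter (fun y => y ≠ (p : Fin K) ∧ y ≠ (q : Fin K)), f y.val := by
  rw [prod_filter, prod_filter, ← Fin.prod_Icc_natCast]
  refine prod_congr rfl fun i hi => ?_
  rw [mem_Icc] at hi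
  have hfi : f (i % K) = f i := by
    rcases hi.2.lt_or_eq with h | rfl
    · rw [Nat.mod_eq_of_lt h]
    · rw [Nat.mod_self, hf]
  simp only [ne_eq, Fin.ext_iff, Fin.val_natCast, hfi]

lemma sum_Icc_sum_mul_prod_filter_Icc_mod {M : Type*} [CommRing M] (f : ℕ → M)
    (hf : f 0 = f K) (c : ℕ → M) :
    ∑ m₁ ∈ Icc 1 K, ∑ m₂ ∈ Icc 1 (K - 1), c m₂ *
        ∏ i ∈ (Icc 1 K).filter (fun i => i % K ≠ m₁ % K ∧ i % K ≠ (m₁ + m₂) % K),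
          f i =
      ∑ x, ∑ m ∈ Icc 1 (K - 1), c m *
        ∏ y ∈ univ.filter (fun y => y ≠ x ∧ y ≠ x + (m : Fin K)), f y.val := by
  simp_rw [prod_filter_Icc_mod f hf, Nat.cast_add]
  exact Fin.sum_Icc_natCast fun x => ∑ m ∈ Icc 1 (K - 1), c m *
    ∏ y ∈ univ.filter (fun y => y ≠ x ∧ y ≠ x + (m : Fin K)), f y.val

end Cycle

section DiffMatrix

variable {K : ℕ} [NeZero K]

lemma Fin.val_add_one_eq_ite (hK : 2 ≤ K) (x : Fin K) :
    (x + 1).val = if x.val + 1 = K then 0 else x.val + 1 := by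
  rw [Fin.val_add, Fin.val_one', Nat.mod_eq_of_lt (by omega : 1 < K)]
  split_ifs with h
  · rw [h, Nat.mod_self]
  · exact Nat.mod_eq_of_lt (by omega)

lemma Fin.eq_add_one_iff (hK : 2 ≤ K) (x y : Fin K) :
    y = x + 1 ↔ y.val = x.val + 1 ∨ x.val + 1 = K ∧ y.val = 0 := by
  rw [Fin.ext_iff, Fin.val_add_one_eq_ite hK]
  split_ifs <;> omega

lemma neg_diffMatrix (hK : 3 ≤ K) (κ : ℕ → ℝ) (hκ : κ 0 = κ K) (z : ℂ) :
    -diffMatrix K κ z = cycleLaplacian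
      (fun x => if x = 0 then (κ K : ℂ) * z ^ K else κ x.val)
      (fun x => if x = 0 then (κ K : ℂ) * z⁻¹ ^ K else κ x.val)
      (fun x => κ x.val) := by
  ext i j
  have hi := i.isLt
  have hj := j.isLt
  have hw : (κ (i + 1).val : ℂ) = κ (i.val + 1) := by
    rw [Fin.val_add_one_eq_ite (by omega)]
    split_ifs with h
    · rw [h, hκ]
    · rfl
  simp only [diffMatrix, cycleLaplacian, Matrix.neg_apply, of_apply,
    Fin.ext_iff (a := i) (b := j), Fin.eq_add_one_iff (by omega : 2 ≤ K),
    Fin.ext_iff (b := (0 : Fin K)), Fin.val_zero, hw]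
  split_ifs <;> first | omega | ring1 | congr 3

end DiffMatrix

/-- For every integer `K ≥ 3`, all real `κ_1,…,κ_K` (with `κ_0 = κ_K`) and every nonzero
complex `z`, the coefficient of `λ^2` in `det(λI − M(z))` is
`c_2 = (1/2) ∑_{m₁=1}^{K} ∑_{m₂=1}^{K−1} m₂ (K − m₂) ∏_{i ∉ {m₁, m₁+m₂ mod K}} κ_i`,
where the product runs over all indices `i ∈ {1,…,K}` (taken mod `K`) other than
`m₁` and `m₁ + m₂`. -/
theorem stmt3 (K : ℕ) (hK : 3 ≤ K) (κ : ℕ → ℝ) (hκ : κ 0 = κ K)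
    (z : ℂ) (hz : z ≠ 0) :
    (diffMatrix K κ z).charpoly.coeff 2
      = (1 / 2 : ℂ) * ∑ m₁ ∈ Finset.Icc 1 K, ∑ m₂ ∈ Finset.Icc 1 (K - 1),
          ((m₂ * (K - m₂) : ℕ) : ℂ) *
            ∏ i ∈ (Finset.Icc 1 K).filter
                (fun i => i % K ≠ m₁ % K ∧ i % K ≠ (m₁ + m₂) % K),
              (κ i : ℂ) := by
  have : NeZero K := ⟨by omega⟩
  have hab : ∀ x : Fin K, (if x = 0 then (κ K : ℂ) * z ^ K else κ x.val) *
      (if x = 0 then (κ K : ℂ) * z⁻¹ ^ K else κ x.val) = κ x.val * κ x.val := by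
    intro x
    split_ifs with hx
    · rw [hx, Fin.val_zero, hκ, mul_mul_mul_comm, ← mul_pow, mul_inv_cancel₀ hz, one_pow,
        mul_one]
    · rfl
  have key := two_nsmul_coeff_two_charpoly_neg_cycleLaplacian _ _ _ hK hab
  rw [← neg_diffMatrix hK κ hκ z, neg_neg, two_nsmul] at key
  simp_rw [nsmul_eq_mul] at key
  rw [sum_Icc_sum_mul_prod_filter_Icc_mod (fun i => (κ i : ℂ)) (by rw [hκ])
    fun m => ((m * (K - m) : ℕ) : ℂ)]
  linear_combination (1 / 2 : ℂ) * key
end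

section
/- The quadratic coefficient c_2 is invariant under translations and reflections of the diffusivity configuration: for every integer K ≥ 2, every function κ : ZMod K → ℝ and every s ∈ ZMod K, one has c_2(κ) = c_2(i ↦ κ(i+s)) and c_2(κ) = c_2(i ↦ κ(s−i)), where c_2(κ) = (1/2) Σ_{m_1 ∈ ZMod K} Σ_{m_2=1}^{K−1} m_2 (K − m_2) ∏_{i ∈ ZMod K, i ≠ m_1, i ≠ m_1+m_2} κ(i). -/
/-- The quadratic coefficient `c_2` of the characteristic polynomial of the periodic
lattice diffusion operator with `K`-periodic diffusivities `κ : ZMod K → ℝ`: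
`c_2(κ) = (1/2) ∑_{m₁ ∈ ZMod K} ∑_{m₂=1}^{K−1} m₂ (K − m₂)
            ∏_{i ∈ ZMod K, i ≠ m₁, i ≠ m₁+m₂} κ(i)`. -/
noncomputable def quadCoeff (K : ℕ) [NeZero K] (κ : ZMod K → ℝ) : ℝ :=
  (1 / 2) * ∑ m₁ : ZMod K, ∑ m₂ ∈ Finset.Icc 1 (K - 1),
    ((m₂ * (K - m₂) : ℕ) : ℝ) *
      ∏ i ∈ Finset.univ.filter (fun i : ZMod K => i ≠ m₁ ∧ i ≠ m₁ + (m₂ : ZMod K)), κ i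

/-! Swapping the two sums, `c₂(κ)` is a weighted sum over the distance `m₂` of
`∑ₐ ∏_{i ∉ {a, a + m₂}} κ i`. A translation or reflection `e` of `ZMod K` maps each pair
`{a, a + m₂}` to another pair at the same distance, bijectively in `a`, so each inner sum is
unchanged. -/

open Finset

lemma filter_ne_and_ne_eq_compl_pair {α : Type*} [Fintype α] [DecidableEq α] (a b : α) :
    univ.filter (fun i => i ≠ a ∧ i ≠ b) = ({a, b} : Finset α)ᶜ := by
  ext; simp

lemma prod_compl_pair_comp_equiv {α M : Type*} [Fintype α] [DecidableEq α] [CommMonoid M]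
    (f : α → M) (e : α ≃ α) (a b : α) :
    ∏ i ∈ ({a, b} : Finset α)ᶜ, f (e i) = ∏ i ∈ ({e a, e b} : Finset α)ᶜ, f i :=
  prod_equiv e (by simp) (fun _ _ => rfl)

section PairComplement

variable {G R : Type*} [AddCommGroup G] [Fintype G] [DecidableEq G] [CommSemiring R]

lemma sum_prod_compl_pair_comp_add_right (f : G → R) (d s : G) :
    ∑ a, ∏ i ∈ ({a, a + d} : Finset G)ᶜ, f (i + s) = ∑ a, ∏ i ∈ ({a, a + d} : Finset G)ᶜ, f i := by
  refine Fintype.sum_equiv (Equiv.addRight s) _ _ fun a => ?_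
  refine (prod_compl_pair_comp_equiv f (Equiv.addRight s) a (a + d)).trans ?_
  simp only [Equiv.coe_addRight, add_right_comm]

lemma sum_prod_compl_pair_comp_sub_left (f : G → R) (d s : G) :
    ∑ a, ∏ i ∈ ({a, a + d} : Finset G)ᶜ, f (s - i) = ∑ a, ∏ i ∈ ({a, a + d} : Finset G)ᶜ, f i := by
  -- `i ↦ s - i` sends `{a, a + d}` to `{a', a' + d}` with `a' = s - d - a`
  refine Fintype.sum_equiv (Equiv.subLeft (s - d)) _ _ fun a => ?_
  refine (prod_compl_pair_comp_equiv f (Equiv.subLeft s) a (a + d)).trans ?_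
  simp only [Equiv.subLeft_apply]
  rw [pair_comm,
    show s - d - a + d = s - a by abel, show s - d - a = s - (a + d) by abel]

end PairComplement

lemma quadCoeff_eq_sum_sum_prod_compl_pair (K : ℕ) [NeZero K] (κ : ZMod K → ℝ) :
    quadCoeff K κ = (1 / 2) * ∑ m₂ ∈ Icc 1 (K - 1), ((m₂ * (K - m₂) : ℕ) : ℝ) *
      ∑ m₁ : ZMod K, ∏ i ∈ ({m₁, m₁ + (m₂ : ZMod K)} : Finset (ZMod K))ᶜ, κ i := by
  simp only [quadCoeff, filter_ne_and_ne_eq_compl_pair, mul_sum]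
  rw [sum_comm]

theorem stmt5_general (K : ℕ) [NeZero K] (κ : ZMod K → ℝ) (s : ZMod K) :
    quadCoeff K κ = quadCoeff K (fun i => κ (i + s))
    ∧ quadCoeff K κ = quadCoeff K (fun i => κ (s - i)) := by
  simp only [quadCoeff_eq_sum_sum_prod_compl_pair, sum_prod_compl_pair_comp_add_right,
    sum_prod_compl_pair_comp_sub_left, and_self]

/-- The quadratic coefficient `c_2` is invariant under translations and reflections of
the diffusivity configuration: for every integer `K ≥ 2`, every `κ : ZMod K → ℝ` and
every `s ∈ ZMod K`, `c_2(κ) = c_2(i ↦ κ(i+s))` and `c_2(κ) = c_2(i ↦ κ(s−i))`. -/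
theorem stmt5 (K : ℕ) [NeZero K] (hK : 2 ≤ K) (κ : ZMod K → ℝ) (s : ZMod K) :
    quadCoeff K κ = quadCoeff K (fun i => κ (i + s))
    ∧ quadCoeff K κ = quadCoeff K (fun i => κ (s - i)) :=
  stmt5_general K κ s
end

section
/- Let K ≥ 2 be an integer, let κ_1,…,κ_K be positive reals with product G = ∏_{i=1}^K κ_i and harmonic mean κ = K(Σ_{i=1}^K 1/κ_i)^{−1}, and let c_2 > 0 be a real constant. Let P_K be the unique polynomial with z^K + z^{−K} − 2 = P_K(z + z^{−1} − 2) for all z ≠ 0. For x ≥ 0 define λ_0(x) = [−K²G/κ + √((K²G/κ)² + 4 c_2 G P_K(x))]/(2 c_2), the root of smaller absolute value of the quadratic c_2 λ² + (K²G/κ) λ − G P_K(x) = 0. Then, as x → 0⁺, λ_0(x) = κ x + κ[ (K²−1)/12 − c_2 κ²/(K² G) ] x² + O(x³). -/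
/-!
Write `a = K²G/κ` and let `q(x) = κ x + β x²` be the claimed expansion. Since `λ₀` solves
`a λ + c₂ λ² = G P_K(x)` and tends to `0`, we have
`(λ₀ - q)(a + c₂ (λ₀ + q)) = G P_K(x) - a q - c₂ q² = O(x³)`, and the second factor tends to
`a ≠ 0`. The cubic bound only needs the first Taylor coefficients of `P_K` at `0`: since
`P_K(x) = C_K(x + 2) - 2` for the normalized Chebyshev polynomial `C_K(z + z⁻¹) = z^K + z^{-K}`,
these are the Taylor coefficients `K²` and `K²(K² - 1)/12` of `C_K` at `2`, which follow from
the recurrence `C_{n+2} = X C_{n+1} - C_n`.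
-/

open Polynomial Asymptotics Filter Topology

section ChebyshevC

variable {R : Type*} [CommRing R]

theorem chebyshevC_eval_add_inv {x y : R} (h : x * y = 1) (n : ℕ) :
    (Chebyshev.C R n).eval (x + y) = x ^ n + y ^ n := by
  rw [← dickson_one_one_eq_chebyshev_C, dickson_one_one_eval_add_inv x y h]

theorem taylor_chebyshevC_add_two (r : R) (n : ℕ) :
    taylor r (Chebyshev.C R (n + 2 : ℕ)) =
      (X + C r) * taylor r (Chebyshev.C R (n + 1 : ℕ)) - taylor r (Chebyshev.C R n) := by
  push_cast
  rw [Chebyshev.C_add_two, map_sub, taylor_mul, taylor_X]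

theorem coeff_X_add_C_mul_succ (r : R) (p : R[X]) (k : ℕ) :
    ((X + C r) * p).coeff (k + 1) = p.coeff k + r * p.coeff (k + 1) := by
  rw [add_mul, coeff_add, coeff_X_mul, coeff_C_mul]

theorem taylor_chebyshevC_coeff_zero (n : ℕ) : (taylor 2 (Chebyshev.C R n)).coeff 0 = 2 := by
  rw [taylor_coeff_zero, Chebyshev.C_eval_two]

theorem taylor_chebyshevC_coeff_one (n : ℕ) :
    (taylor 2 (Chebyshev.C R n)).coeff 1 = (n : R) ^ 2 := by
  induction n using Nat.twoStepInduction with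
  | zero => simp [taylor_apply]
  | one => simp [taylor_apply]
  | more n ih₀ ih₁ =>
    rw [taylor_chebyshevC_add_two, coeff_sub, coeff_X_add_C_mul_succ, ih₀, ih₁,
      taylor_chebyshevC_coeff_zero]
    push_cast
    ring

theorem taylor_chebyshevC_coeff_two (n : ℕ) :
    12 * (taylor 2 (Chebyshev.C R n)).coeff 2 = (n : R) ^ 2 * ((n : R) ^ 2 - 1) := by
  induction n using Nat.twoStepInduction with
  | zero => simp [taylor_apply]
  | one => simp [taylor_apply, coeff_X]
  | more n ih₀ ih₁ =>
    rw [taylor_chebyshevC_add_two, coeff_sub, coeff_X_add_C_mul_succ,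
      taylor_chebyshevC_coeff_one]
    push_cast at ih₁ ⊢
    linear_combination 2 * ih₁ - ih₀

end ChebyshevC

theorem IsAlgClosed.exists_add_inv_eq {k : Type*} [Field k] [IsAlgClosed k] [NeZero (2 : k)]
    (w : k) : ∃ z : k, z ≠ 0 ∧ z + z⁻¹ = w := by
  obtain ⟨z, hz⟩ := exists_quadratic_eq_zero (a := 1) (b := -w) (c := 1) one_ne_zero
    (IsAlgClosed.exists_eq_mul_self _)
  have hz₀ : z ≠ 0 := by rintro rfl; simp at hz
  refine ⟨z, hz₀, ?_⟩
  field_simp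
  linear_combination hz

theorem eq_taylor_chebyshevC_sub_two {K : ℕ} {P : ℝ[X]}
    (hP : ∀ z : ℂ, z ≠ 0 → z ^ K + z⁻¹ ^ K - 2 = aeval (z + z⁻¹ - 2) P) :
    P = taylor 2 (Chebyshev.C ℝ K) - 2 := by
  apply map_injective _ (algebraMap ℝ ℂ).injective
  apply Polynomial.funext
  intro w
  obtain ⟨z, hz, hzw⟩ := IsAlgClosed.exists_add_inv_eq (w + 2)
  have := hP z hz
  rw [hzw, add_sub_cancel_right] at this
  rw [eval_map_algebraMap, ← this, Polynomial.map_sub, map_taylor, Chebyshev.map_C]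
  simp [taylor_eval, ← hzw, chebyshevC_eval_add_inv (mul_inv_cancel₀ hz)]

theorem Polynomial.isBigO_eval_sub_sum_coeff {𝕜 : Type*} [NormedField 𝕜] (p : 𝕜[X]) (n : ℕ) :
    (fun x => p.eval x - ∑ i ∈ Finset.range n, p.coeff i * x ^ i) =O[𝓝 0] (· ^ n) := by
  obtain ⟨q, hq⟩ : X ^ n ∣ p - ∑ i ∈ Finset.range n, C (p.coeff i) * X ^ i := by
    refine X_pow_dvd_iff.2 fun d hd => ?_
    simp [Finset.mem_range.2 hd]
  have hrem (x : 𝕜) : p.eval x - ∑ i ∈ Finset.range n, p.coeff i * x ^ i = x ^ n * q.eval x := by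
    simpa [eval_finsetSum] using congrArg (eval x) hq
  simp only [hrem]
  simpa using (isBigO_refl (· ^ n) (𝓝 (0 : 𝕜))).mul ((q.continuous.tendsto 0).isBigO_one 𝕜)

theorem isBigO_sub_of_tendsto_quadratic {α 𝕜 : Type*} [NormedField 𝕜] {l : Filter α}
    {u v : α → 𝕜} {a c : 𝕜} (ha : a ≠ 0) (hu : Tendsto u l (𝓝 0)) (hv : Tendsto v l (𝓝 0)) :
    (fun x => u x - v x) =O[l] fun x => (a * u x + c * u x ^ 2) - (a * v x + c * v x ^ 2) := by
  have hd : Tendsto (fun x => a + c * (u x + v x)) l (𝓝 a) := by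
    simpa using tendsto_const_nhds.add ((hu.add hv).const_mul c)
  have hfac : (fun x => u x - v x) =ᶠ[l]
      fun x => ((a * u x + c * u x ^ 2) - (a * v x + c * v x ^ 2)) * (a + c * (u x + v x))⁻¹ := by
    filter_upwards [hd.eventually_ne ha] with x hx
    field_simp
    ring
  exact (isBigO_refl _ _).mul ((hd.inv₀ ha).isBigO_one 𝕜) |>.congr' hfac.symm (by simp)

noncomputable def quadSmallRoot (a c p : ℝ) : ℝ := (-a + √(a ^ 2 + 4 * c * p)) / (2 * c)

theorem quadSmallRoot_spec {a c p : ℝ} (hc : c ≠ 0) (hp : 0 ≤ a ^ 2 + 4 * c * p) :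
    a * quadSmallRoot a c p + c * quadSmallRoot a c p ^ 2 = p := by
  have hsq := Real.sq_sqrt hp
  unfold quadSmallRoot
  field_simp
  linear_combination hsq

theorem continuous_quadSmallRoot (a c : ℝ) : Continuous (quadSmallRoot a c) := by
  unfold quadSmallRoot
  fun_prop

theorem quadSmallRoot_zero {a : ℝ} (ha : 0 ≤ a) (c : ℝ) : quadSmallRoot a c 0 = 0 := by
  simp [quadSmallRoot, Real.sqrt_sq ha]

theorem quadSmallRoot_isBigO {a c b₁ b₂ : ℝ} (ha : 0 < a) (hc : c ≠ 0) {p : ℝ → ℝ}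
    (hp : (fun x => p x - (b₁ * x + b₂ * x ^ 2)) =O[𝓝 0] (· ^ 3)) :
    (fun x => quadSmallRoot a c (p x) - (b₁ / a * x + (b₂ / a - c * b₁ ^ 2 / a ^ 3) * x ^ 2))
      =O[𝓝 0] (· ^ 3) := by
  set β := b₂ / a - c * b₁ ^ 2 / a ^ 3
  have hp₀ : Tendsto p (𝓝 0) (𝓝 0) := by
    have hrem := hp.trans_tendsto ((continuous_pow 3).tendsto' 0 0 (by simp))
    have hmain : Tendsto (fun x : ℝ => b₁ * x + b₂ * x ^ 2) (𝓝 0) (𝓝 0) :=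
      (by fun_prop : Continuous fun x : ℝ => b₁ * x + b₂ * x ^ 2).tendsto' 0 0 (by simp)
    simpa using hrem.add hmain
  have hroot : Tendsto (fun x => quadSmallRoot a c (p x)) (𝓝 0) (𝓝 0) :=
    ((continuous_quadSmallRoot a c).tendsto' 0 0 (quadSmallRoot_zero ha.le c)).comp hp₀
  have happrox : Tendsto (fun x : ℝ => b₁ / a * x + β * x ^ 2) (𝓝 0) (𝓝 0) :=
    (by fun_prop : Continuous fun x : ℝ => b₁ / a * x + β * x ^ 2).tendsto' 0 0 (by simp)
  refine (isBigO_sub_of_tendsto_quadratic (c := c) ha.ne' hroot happrox).trans ?_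
  have hdisc : ∀ᶠ x in 𝓝 0, 0 ≤ a ^ 2 + 4 * c * p x := by
    have : Tendsto (fun x => a ^ 2 + 4 * c * p x) (𝓝 0) (𝓝 (a ^ 2)) := by
      simpa using tendsto_const_nhds.add (hp₀.const_mul (4 * c))
    exact this.eventually (eventually_ge_nhds (by positivity))
  have hcubic : (fun x : ℝ => x ^ 3 * (-c * (2 * b₁ / a * β + β ^ 2 * x))) =O[𝓝 0] (· ^ 3) := by
    have hbdd : (fun x : ℝ => -c * (2 * b₁ / a * β + β ^ 2 * x)) =O[𝓝 0] fun _ => (1 : ℝ) :=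
      (Continuous.tendsto (by fun_prop) 0).isBigO_one ℝ
    simpa using (isBigO_refl (· ^ 3) (𝓝 (0 : ℝ))).mul hbdd
  refine (hp.add hcubic).congr' ?_ .rfl
  filter_upwards [hdisc] with x hx
  rw [quadSmallRoot_spec hc hx]
  simp only [β]
  field_simp
  ring

/-- Let `K ≥ 2`, let `κ_1,…,κ_K` be positive reals with product `G = ∏ κ_i` and harmonic
mean `κ_h = K (∑ 1/κ_i)⁻¹`, and let `c₂ > 0`.  Let `P_K` be the unique polynomial with
`z^K + z^{−K} − 2 = P_K(z + z^{−1} − 2)` for all `z ≠ 0`.  For `x ≥ 0` let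
`λ₀(x) = [−K²G/κ_h + √((K²G/κ_h)² + 4 c₂ G P_K(x))]/(2 c₂)` be the smaller-magnitude root
of `c₂ λ² + (K²G/κ_h) λ − G P_K(x) = 0`.  Then, as `x → 0⁺`,
`λ₀(x) = κ_h x + κ_h [(K²−1)/12 − c₂ κ_h²/(K² G)] x² + O(x³)`. -/
theorem stmt9 (K : ℕ) (hK : 2 ≤ K) (κ : Fin K → ℝ) (hκ : ∀ i, 0 < κ i)
    (c₂ : ℝ) (hc₂ : 0 < c₂) (P : Polynomial ℝ)
    (hP : ∀ z : ℂ, z ≠ 0 → z ^ K + z⁻¹ ^ K - 2 = Polynomial.aeval (z + z⁻¹ - 2) P) :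
    (fun x : ℝ =>
        (-((K : ℝ) ^ 2 * (∏ i, κ i) / ((K : ℝ) * (∑ i, (κ i)⁻¹)⁻¹))
            + Real.sqrt (((K : ℝ) ^ 2 * (∏ i, κ i) / ((K : ℝ) * (∑ i, (κ i)⁻¹)⁻¹)) ^ 2
                + 4 * c₂ * (∏ i, κ i) * P.eval x)) / (2 * c₂)
          - (((K : ℝ) * (∑ i, (κ i)⁻¹)⁻¹) * x
              + ((K : ℝ) * (∑ i, (κ i)⁻¹)⁻¹)
                * (((K : ℝ) ^ 2 - 1) / 12
                    - c₂ * ((K : ℝ) * (∑ i, (κ i)⁻¹)⁻¹) ^ 2 / ((K : ℝ) ^ 2 * ∏ i, κ i))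
                * x ^ 2))
      =O[nhdsWithin 0 (Set.Ioi 0)] (fun x => x ^ 3) := by
  have hK₀ : (0 : ℝ) < K := by exact_mod_cast (by omega : 0 < K)
  set G := ∏ i, κ i
  set κh := (K : ℝ) * (∑ i, (κ i)⁻¹)⁻¹
  have hG : 0 < G := Finset.prod_pos fun i _ => hκ i
  have hκh : 0 < κh := mul_pos hK₀ <| inv_pos.2 <| Finset.sum_pos (fun i _ => inv_pos.2 (hκ i))
    (Finset.univ_nonempty_iff.2 ⟨⟨0, by omega⟩⟩)
  have hPeq := eq_taylor_chebyshevC_sub_two hP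
  have hcoeff₀ : P.coeff 0 = 0 := by
    rw [hPeq, coeff_sub, taylor_chebyshevC_coeff_zero]; simp
  have hcoeff₁ : P.coeff 1 = (K : ℝ) ^ 2 := by
    rw [hPeq, coeff_sub, taylor_chebyshevC_coeff_one]; simp
  have hcoeff₂ : P.coeff 2 = (K : ℝ) ^ 2 * ((K : ℝ) ^ 2 - 1) / 12 := by
    rw [eq_div_iff (by norm_num), mul_comm, ← taylor_chebyshevC_coeff_two K, hPeq, coeff_sub]; simp
  have hp : (fun x => G * P.eval x
      - (G * (K : ℝ) ^ 2 * x + G * ((K : ℝ) ^ 2 * ((K : ℝ) ^ 2 - 1) / 12) * x ^ 2))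
        =O[𝓝 0] (· ^ 3) := by
    simpa [Finset.sum_range_succ, hcoeff₀, hcoeff₁, hcoeff₂, mul_assoc] using
      (C G * P).isBigO_eval_sub_sum_coeff 3
  have hexp := quadSmallRoot_isBigO (c := c₂) (by positivity : 0 < (K : ℝ) ^ 2 * G / κh) hc₂.ne' hp
  refine (hexp.mono nhdsWithin_le_nhds).congr (fun x => ?_) fun _ => rfl
  simp only [quadSmallRoot]
  field_simp
end

section
/- With the setup of the quadratic truncation, the emergent macroscale diffusivity equals the harmonic mean of the microscale diffusivities: for K ≥ 2, positive reals κ_1,…,κ_K with product G and harmonic mean κ = K(Σ_{i=1}^K 1/κ_i)^{−1}, and any real c_2 > 0, the smaller-magnitude root λ_0(x) = [−K²G/κ + √((K²G/κ)² + 4 c_2 G P_K(x))]/(2 c_2) satisfies λ_0(x)/x → κ as x → 0⁺. -/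
/-!
Write `b = K²G/κ` for the linear coefficient. Rationalising the numerator, the small root is
`λ₀(x) = 2 G P_K(x) / (√(b² + 4 c₂ G P_K(x)) + b)`, so `λ₀(x)/x → G P_K'(0) / b` and everything
comes down to `P_K'(0) = K²`. On the real line `z^K + z^{-K} - 2 = (z^K - 1)²/z^K` and
`z + z⁻¹ - 2 = (z - 1)²/z`, so away from `z = 1` their quotient `P_K(x)/x` is the geometric-sum
expression `(1 + z + ⋯ + z^{K-1})² z / z^K`, whose value at `z = 1` is `K²`.
-/

open Filter Topology Polynomial Finset

lemma eval_add_inv_sub_two_of_complex {K : ℕ} {P : ℝ[X]}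
    (hP : ∀ z : ℂ, z ≠ 0 → z ^ K + z⁻¹ ^ K - 2 = aeval (z + z⁻¹ - 2) P)
    {z : ℝ} (hz : z ≠ 0) : z ^ K + z⁻¹ ^ K - 2 = P.eval (z + z⁻¹ - 2) := by
  have h := hP z (by exact_mod_cast hz)
  have hcast := aeval_algebraMap_apply_eq_algebraMap_eval (A := ℂ) (z + z⁻¹ - 2) P
  simp only [Complex.coe_algebraMap] at hcast
  push_cast at hcast
  rw [hcast] at h
  exact_mod_cast h

lemma pow_add_inv_pow_sub_two_eq (K : ℕ) {z : ℝ} (hz : z ≠ 0) :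
    z ^ K + z⁻¹ ^ K - 2 = (∑ i ∈ range K, z ^ i) ^ 2 * z / z ^ K * (z + z⁻¹ - 2) := by
  have hgeom := geom_sum_mul z K
  rw [inv_pow]
  field_simp
  linear_combination (-(∑ i ∈ range K, z ^ i) * (z - 1) - (z ^ K - 1)) * hgeom

lemma add_inv_sub_two_ne_zero {z : ℝ} (hz : z ≠ 0) (hz₁ : z ≠ 1) : z + z⁻¹ - 2 ≠ 0 := by
  have : z + z⁻¹ - 2 = (z - 1) ^ 2 / z := by field_simp; ring
  rw [this]
  exact div_ne_zero (pow_ne_zero 2 (sub_ne_zero.mpr hz₁)) hz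

lemma eval_zero_eq_sq_of_X_mul {K : ℕ} {Q : ℝ[X]}
    (hQ : ∀ z : ℝ, z ≠ 0 → z ^ K + z⁻¹ ^ K - 2 = (X * Q).eval (z + z⁻¹ - 2)) :
    Q.eval 0 = (K : ℝ) ^ 2 := by
  have hg : ContinuousAt (fun z : ℝ => z + z⁻¹ - 2) 1 := by fun_prop (disch := norm_num)
  have hlim₁ : Tendsto (fun z : ℝ => Q.eval (z + z⁻¹ - 2)) (𝓝[≠] 1) (𝓝 (Q.eval 0)) := by
    have := Q.continuous.continuousAt.tendsto.comp hg
    norm_num at this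
    exact this.mono_left nhdsWithin_le_nhds
  have hlim₂ : Tendsto (fun z : ℝ => (∑ i ∈ range K, z ^ i) ^ 2 * z / z ^ K) (𝓝[≠] 1)
      (𝓝 ((K : ℝ) ^ 2)) := by
    have hc : ContinuousAt (fun z : ℝ => (∑ i ∈ range K, z ^ i) ^ 2 * z / z ^ K) 1 := by
      fun_prop (disch := norm_num)
    simpa using hc.tendsto.mono_left nhdsWithin_le_nhds
  have heq : (fun z : ℝ => Q.eval (z + z⁻¹ - 2)) =ᶠ[𝓝[≠] 1]
      fun z => (∑ i ∈ range K, z ^ i) ^ 2 * z / z ^ K := by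
    filter_upwards [nhdsWithin_le_nhds (eventually_gt_nhds one_pos), self_mem_nhdsWithin]
      with z hz₀ hz₁
    have h := (hQ z hz₀.ne').symm
    rw [pow_add_inv_pow_sub_two_eq K hz₀.ne', eval_mul, eval_X] at h
    exact mul_left_cancel₀ (add_inv_sub_two_ne_zero hz₀.ne' hz₁) (h.trans (mul_comm _ _))
  exact tendsto_nhds_unique (hlim₁.congr' heq) hlim₂

lemma tendsto_eval_div_self {K : ℕ} {P : ℝ[X]}
    (hP : ∀ z : ℝ, z ≠ 0 → z ^ K + z⁻¹ ^ K - 2 = P.eval (z + z⁻¹ - 2)) :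
    Tendsto (fun x => P.eval x / x) (𝓝[≠] 0) (𝓝 ((K : ℝ) ^ 2)) := by
  have hP0 : P.eval 0 = 0 := by simpa [one_add_one_eq_two] using (hP 1 one_ne_zero).symm
  obtain ⟨Q, rfl⟩ : X ∣ P := X_dvd_iff.mpr (by rwa [coeff_zero_eq_eval_zero])
  have hQ : Tendsto Q.eval (𝓝[≠] 0) (𝓝 ((K : ℝ) ^ 2)) :=
    eval_zero_eq_sq_of_X_mul hP ▸ Q.continuous.continuousAt.tendsto.mono_left nhdsWithin_le_nhds
  refine hQ.congr' (eventually_nhdsWithin_of_forall fun x hx => ?_)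
  simp only [eval_mul, eval_X, mul_div_cancel_left₀ _ hx]

lemma tendsto_quadratic_root_div {p : ℝ → ℝ} {a b c M : ℝ} (hb : 0 < b) (hc : c ≠ 0)
    (hp : Tendsto (fun x => p x / x) (𝓝[≠] 0) (𝓝 M)) :
    Tendsto (fun x => (-b + √(b ^ 2 + 4 * c * a * p x)) / (2 * c) / x) (𝓝[≠] 0)
      (𝓝 (a * M / b)) := by
  have hp₀ : Tendsto p (𝓝[≠] 0) (𝓝 0) := by
    have := hp.mul (tendsto_nhdsWithin_of_tendsto_nhds (tendsto_id (x := 𝓝 (0 : ℝ))))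
    rw [mul_zero] at this
    exact this.congr' (eventually_nhdsWithin_of_forall fun x hx => div_mul_cancel₀ _ hx)
  have hdisc : Tendsto (fun x => b ^ 2 + 4 * c * a * p x) (𝓝[≠] 0) (𝓝 (b ^ 2)) := by
    simpa using (hp₀.const_mul (4 * c * a)).const_add (b ^ 2)
  have hroot : Tendsto (fun x => √(b ^ 2 + 4 * c * a * p x)) (𝓝[≠] 0) (𝓝 b) := by
    simpa [Real.sqrt_sq hb.le] using hdisc.sqrt
  have hlim : Tendsto (fun x => 2 * a * (p x / x) / (√(b ^ 2 + 4 * c * a * p x) + b)) (𝓝[≠] 0)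
      (𝓝 (a * M / b)) := by
    have hval : 2 * a * M / (b + b) = a * M / b := by field_simp; ring
    have h := (hp.const_mul (2 * a)).div (hroot.add_const b) (by positivity)
    rwa [hval] at h
  refine hlim.congr' ?_
  filter_upwards [hdisc.eventually (eventually_gt_nhds (by positivity)), self_mem_nhdsWithin]
    with x hpos (hx : x ≠ 0)
  have hsq := Real.sq_sqrt hpos.le
  set r := √(b ^ 2 + 4 * c * a * p x)
  have hden : r + b ≠ 0 := by positivity
  field_simp
  linear_combination -hsq

/-- The emergent macroscale diffusivity equals the harmonic mean of the microscale
diffusivities: for `K ≥ 2`, positive reals `κ_1,…,κ_K` with product `G = ∏ κ_i` and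
harmonic mean `κ_h = K (∑ 1/κ_i)⁻¹`, any real `c₂ > 0`, and `P_K` the unique polynomial
with `z^K + z^{−K} − 2 = P_K(z + z^{−1} − 2)` for all `z ≠ 0`, the smaller-magnitude root
`λ₀(x) = [−K²G/κ_h + √((K²G/κ_h)² + 4 c₂ G P_K(x))]/(2 c₂)` of the quadratic truncation
satisfies `λ₀(x)/x → κ_h` as `x → 0⁺`. -/
theorem stmt10 (K : ℕ) (hK : 2 ≤ K) (κ : Fin K → ℝ) (hκ : ∀ i, 0 < κ i)
    (c₂ : ℝ) (hc₂ : 0 < c₂) (P : Polynomial ℝ)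
    (hP : ∀ z : ℂ, z ≠ 0 → z ^ K + z⁻¹ ^ K - 2 = Polynomial.aeval (z + z⁻¹ - 2) P) :
    Tendsto
      (fun x : ℝ =>
        ((-((K : ℝ) ^ 2 * (∏ i, κ i) / ((K : ℝ) * (∑ i, (κ i)⁻¹)⁻¹))
            + Real.sqrt (((K : ℝ) ^ 2 * (∏ i, κ i) / ((K : ℝ) * (∑ i, (κ i)⁻¹)⁻¹)) ^ 2
                + 4 * c₂ * (∏ i, κ i) * P.eval x)) / (2 * c₂)) / x)
      (nhdsWithin 0 (Set.Ioi 0))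
      (nhds ((K : ℝ) * (∑ i, (κ i)⁻¹)⁻¹)) := by
  have hKpos : (0 : ℝ) < K := by exact_mod_cast (by omega : 0 < K)
  have hsum : 0 < ∑ i, (κ i)⁻¹ :=
    sum_pos (fun i _ => inv_pos.mpr (hκ i)) ⟨⟨0, by omega⟩, mem_univ _⟩
  set G := ∏ i, κ i
  set κₕ := (K : ℝ) * (∑ i, (κ i)⁻¹)⁻¹
  have hG : 0 < G := prod_pos fun i _ => hκ i
  have hκₕ : 0 < κₕ := by positivity
  have hlim := tendsto_quadratic_root_div (a := G) (b := (K : ℝ) ^ 2 * G / κₕ) (by positivity)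
    hc₂.ne' (tendsto_eval_div_self fun _ hz => eval_add_inv_sub_two_of_complex hP hz)
  have hval : G * (K : ℝ) ^ 2 / ((K : ℝ) ^ 2 * G / κₕ) = κₕ := by field_simp
  rw [hval] at hlim
  exact hlim.mono_left (nhdsWithin_mono _ fun x (hx : 0 < x) => hx.ne')
end

section
/- Let r be a nonzero real and Γ ≥ 1 an integer. For real θ, set t = e^θ, δ = t^{1/2} − t^{−1/2} = 2 sinh(θ/2) and μ = (t^{1/2} + t^{−1/2})/2 = cosh(θ/2). Then, for each choice of sign, as θ → 0, t^{±r} = 1 + Σ_{k=1}^{Γ} [∏_{l=0}^{k−1}(r² − l²)] · (±(2k/r) μ δ^{2k−1} + δ^{2k}) / (2k)! + O(θ^{2Γ+1}). In particular, truncating the patch coupling conditions at order Γ in the coupling parameter introduces errors of order θ^{2Γ+1}, i.e., of orders δ̄^{2(Γ+1)} and μ̄δ̄^{2Γ+1} in the macroscale operators. -/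
/-!
Write `t^{±r} = cosh (rθ) ± sinh (rθ)` and let `P = 1 + ∑_{k ≤ Γ} A_k δ^{2k}/(2k)!` with
`A_k = ∏_{l<k} (r² − l²)`. From `δ' = μ`, `μ' = δ/4` and `μ² = 1 + δ²/4` the second
derivatives of the terms telescope, giving `P'' = r² P − A_{Γ+1} δ^{2Γ}/(2Γ)!`. Hence
`R = cosh (rθ) − P` solves `R'' = r² R + O(θ^{2Γ})` with `R(0) = R'(0) = 0`, and integrating
twice with the mean value theorem, starting from `R = O(1)`, bootstraps this to
`R = O(θ^{2Γ+2})`, `R' = O(θ^{2Γ+1})`. The claimed expansion of `t^{±r}` is `P ± P'/r`, whose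
error is `R ± R'/r`.
-/

open Asymptotics Filter Topology

section

variable {E : Type*} [NormedAddCommGroup E] [NormedSpace ℝ E]

theorem isBigO_pow_pow_of_le {m n : ℕ} (h : m ≤ n) :
    (fun x : ℝ => x ^ n) =O[𝓝 0] fun x => x ^ m := by
  rcases h.lt_or_eq with h | rfl
  · exact (isLittleO_pow_pow h).isBigO
  · exact isBigO_refl _ _

theorem isBigO_pow_succ_of_hasDerivAt {f f' : ℝ → E} {j : ℕ}
    (hf : ∀ x, HasDerivAt f (f' x) x) (hf0 : f 0 = 0) (hf' : f' =O[𝓝 0] fun x => x ^ j) :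
    f =O[𝓝 0] fun x => x ^ (j + 1) := by
  obtain ⟨C, hC, hbound⟩ := hf'.exists_pos
  obtain ⟨ε, hε, hball⟩ := Metric.eventually_nhds_iff_ball.mp hbound.bound
  refine IsBigO.of_bound C (Metric.eventually_nhds_iff_ball.mpr ⟨ε, hε, fun x hx => ?_⟩)
  have hmv : ‖f x - f 0‖ ≤ C * ‖x‖ ^ j * ‖x - 0‖ := by
    refine (convex_closedBall (0 : ℝ) ‖x‖).norm_image_sub_le_of_norm_hasDerivWithin_le
      (fun y _ => (hf y).hasDerivWithinAt) (fun y hy => ?_)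
      (Metric.mem_closedBall_self (norm_nonneg x)) (by simp)
    rw [mem_closedBall_zero_iff] at hy
    calc ‖f' y‖ ≤ C * ‖y ^ j‖ :=
          hball y (Metric.closedBall_subset_ball (mem_ball_zero_iff.mp hx) (by simpa using hy))
      _ ≤ C * ‖x‖ ^ j := by rw [norm_pow]; gcongr
  simpa [hf0, norm_pow, pow_succ, mul_assoc] using hmv

theorem isBigO_pow_of_hasDerivAt_deriv_eq_smul_add {f f' g : ℝ → E} {a : ℝ} {n : ℕ}
    (hf : ∀ x, HasDerivAt f (f' x) x) (hf' : ∀ x, HasDerivAt f' (a • f x + g x) x)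
    (hf0 : f 0 = 0) (hf'0 : f' 0 = 0) (hg : g =O[𝓝 0] fun x => x ^ n) :
    f =O[𝓝 0] (fun x => x ^ (n + 2)) ∧ f' =O[𝓝 0] (fun x => x ^ (n + 1)) := by
  have step : ∀ m ≤ n, f =O[𝓝 0] (fun x => x ^ m) →
      f =O[𝓝 0] (fun x => x ^ (m + 2)) ∧ f' =O[𝓝 0] (fun x => x ^ (m + 1)) := by
    intro m hm hfm
    have hf'' : (fun x => a • f x + g x) =O[𝓝 0] fun x => x ^ m :=
      (hfm.const_smul_left a).add (hg.trans (isBigO_pow_pow_of_le hm))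
    have hf'm := isBigO_pow_succ_of_hasDerivAt hf' hf'0 hf''
    exact ⟨isBigO_pow_succ_of_hasDerivAt hf hf0 hf'm, hf'm⟩
  have hfn : ∀ m ≤ n, f =O[𝓝 0] (fun x => x ^ m) := by
    intro m
    induction m with
    | zero => intro _; simpa using (hf 0).continuousAt.tendsto.isBigO_one ℝ
    | succ m ih =>
      intro hm
      exact (step m (by omega) (ih (by omega))).1.trans (isBigO_pow_pow_of_le (by omega))
  exact step n le_rfl (hfn n le_rfl)

end

namespace PatchCoupling

open Real Finset

noncomputable def delta (θ : ℝ) : ℝ := 2 * sinh (θ / 2)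

noncomputable def mu (θ : ℝ) : ℝ := cosh (θ / 2)

theorem delta_zero : delta 0 = 0 := by simp [delta]

theorem mu_sq (θ : ℝ) : mu θ ^ 2 = 1 + delta θ ^ 2 / 4 := by
  rw [mu, delta, cosh_sq']
  ring

theorem hasDerivAt_delta (θ : ℝ) : HasDerivAt delta (mu θ) θ := by
  refine (((hasDerivAt_sinh (θ / 2)).comp θ ((hasDerivAt_id θ).div_const 2)).const_mul 2
    ).congr_deriv ?_
  rw [mu]
  ring

theorem hasDerivAt_mu (θ : ℝ) : HasDerivAt mu (delta θ / 4) θ := by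
  refine ((hasDerivAt_cosh (θ / 2)).comp θ ((hasDerivAt_id θ).div_const 2)).congr_deriv ?_
  rw [delta]
  ring

theorem isBigO_delta_pow (n : ℕ) :
    (fun θ => delta θ ^ n) =O[𝓝 0] fun θ : ℝ => θ ^ n := by
  have := (hasDerivAt_delta 0).isBigO_sub
  simp only [delta_zero, sub_zero] at this
  exact this.pow n

theorem hasDerivAt_delta_pow_div_factorial (k : ℕ) (θ : ℝ) :
    HasDerivAt (fun θ => delta θ ^ (2 * k) / (2 * k).factorial)
      (2 * k * mu θ * delta θ ^ (2 * k - 1) / (2 * k).factorial) θ := by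
  refine (((hasDerivAt_delta θ).fun_pow (2 * k)).div_const ((2 * k).factorial : ℝ)
    ).congr_deriv ?_
  push_cast
  ring

theorem hasDerivAt_mu_mul_delta_pow_div_factorial (k : ℕ) (θ : ℝ) :
    HasDerivAt (fun θ => 2 * (k + 1) * mu θ * delta θ ^ (2 * k + 1) / (2 * k + 2).factorial)
      (delta θ ^ (2 * k) / (2 * k).factorial
        + (k + 1) ^ 2 * delta θ ^ (2 * k + 2) / (2 * k + 2).factorial) θ := by
  refine ((((hasDerivAt_mu θ).const_mul (2 * (k + 1) : ℝ)).fun_mul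
    ((hasDerivAt_delta θ).fun_pow (2 * k + 1))).div_const ((2 * k + 2).factorial : ℝ)
    ).congr_deriv ?_
  rw [Nat.factorial_succ, Nat.factorial_succ, Nat.add_sub_cancel]
  push_cast
  have hμ : mu θ * ((2 * k + 1) * delta θ ^ (2 * k) * mu θ)
      = (2 * k + 1) * delta θ ^ (2 * k) * (1 + delta θ ^ 2 / 4) := by
    rw [← mu_sq]; ring
  rw [mul_assoc _ (mu θ), hμ]
  field_simp
  ring

noncomputable def coshCoeff (r : ℝ) (k : ℕ) : ℝ := ∏ l ∈ range k, (r ^ 2 - (l : ℝ) ^ 2)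

noncomputable def coshSum (r : ℝ) (Γ : ℕ) (θ : ℝ) : ℝ :=
  1 + ∑ k ∈ Icc 1 Γ, coshCoeff r k * (delta θ ^ (2 * k) / (2 * k).factorial)

noncomputable def coshSumDeriv (r : ℝ) (Γ : ℕ) (θ : ℝ) : ℝ :=
  ∑ k ∈ Icc 1 Γ, coshCoeff r k * (2 * k * mu θ * delta θ ^ (2 * k - 1) / (2 * k).factorial)

theorem coshCoeff_succ (r : ℝ) (k : ℕ) :
    coshCoeff r (k + 1) = coshCoeff r k * (r ^ 2 - k ^ 2) :=
  prod_range_succ _ k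

theorem hasDerivAt_coshSum (r : ℝ) (Γ : ℕ) (θ : ℝ) :
    HasDerivAt (coshSum r Γ) (coshSumDeriv r Γ θ) θ :=
  (HasDerivAt.fun_sum fun k _ =>
    (hasDerivAt_delta_pow_div_factorial k θ).const_mul (coshCoeff r k)).const_add 1

theorem coshSum_succ (r : ℝ) (Γ : ℕ) (θ : ℝ) :
    coshSum r (Γ + 1) θ = coshSum r Γ θ
      + coshCoeff r (Γ + 1) * (delta θ ^ (2 * Γ + 2) / (2 * Γ + 2).factorial) := by
  rw [coshSum, coshSum, sum_Icc_succ_top (by omega), add_assoc]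
  rfl

theorem coshSumDeriv_succ (r : ℝ) (Γ : ℕ) (θ : ℝ) :
    coshSumDeriv r (Γ + 1) θ = coshSumDeriv r Γ θ + coshCoeff r (Γ + 1)
      * (2 * (Γ + 1) * mu θ * delta θ ^ (2 * Γ + 1) / (2 * Γ + 2).factorial) := by
  rw [coshSumDeriv, coshSumDeriv, sum_Icc_succ_top (by omega)]
  push_cast
  rfl

theorem hasDerivAt_coshSumDeriv (r : ℝ) (Γ : ℕ) (θ : ℝ) :
    HasDerivAt (coshSumDeriv r Γ)
      (r ^ 2 * coshSum r Γ θ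
        - coshCoeff r (Γ + 1) * (delta θ ^ (2 * Γ) / (2 * Γ).factorial)) θ := by
  induction Γ with
  | zero =>
    have hzero : coshSumDeriv r 0 = fun _ => 0 := by ext; simp [coshSumDeriv]
    rw [hzero]
    simpa [coshSum, coshCoeff] using hasDerivAt_const θ (0 : ℝ)
  | succ Γ ih =>
    rw [show coshSumDeriv r (Γ + 1) = _ from funext (coshSumDeriv_succ r Γ)]
    refine (ih.add ((hasDerivAt_mu_mul_delta_pow_div_factorial Γ θ).const_mul
      (coshCoeff r (Γ + 1)))).congr_deriv ?_
    rw [coshSum_succ, coshCoeff_succ r (Γ + 1), show 2 * (Γ + 1) = 2 * Γ + 2 by ring]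
    push_cast
    ring

theorem coshSum_apply_zero (r : ℝ) (Γ : ℕ) : coshSum r Γ 0 = 1 := by
  rw [coshSum, add_eq_left]
  refine sum_eq_zero fun k hk => ?_
  rw [delta_zero, zero_pow (by grind), zero_div, mul_zero]

theorem coshSumDeriv_apply_zero (r : ℝ) (Γ : ℕ) : coshSumDeriv r Γ 0 = 0 := by
  refine sum_eq_zero fun k hk => ?_
  rw [delta_zero, zero_pow (by grind), mul_zero, zero_div, mul_zero]

theorem isBigO_cosh_sub_coshSum (r : ℝ) (Γ : ℕ) :
    (fun θ => cosh (r * θ) - coshSum r Γ θ) =O[𝓝 0] (fun θ => θ ^ (2 * Γ + 2)) ∧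
      (fun θ => r * sinh (r * θ) - coshSumDeriv r Γ θ) =O[𝓝 0] fun θ => θ ^ (2 * Γ + 1) := by
  refine isBigO_pow_of_hasDerivAt_deriv_eq_smul_add (a := r ^ 2)
    (g := fun θ => coshCoeff r (Γ + 1) / (2 * Γ).factorial * delta θ ^ (2 * Γ))
    (fun θ => ?_) (fun θ => ?_) (by simp [coshSum_apply_zero])
    (by simp [coshSumDeriv_apply_zero])
    ((isBigO_delta_pow _).const_mul_left _)
  · refine (((hasDerivAt_id' θ).const_mul r).cosh.sub (hasDerivAt_coshSum r Γ θ)).congr_deriv ?_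
    ring
  · refine ((((hasDerivAt_id' θ).const_mul r).sinh.const_mul r).sub
      (hasDerivAt_coshSumDeriv r Γ θ)).congr_deriv ?_
    rw [smul_eq_mul]
    ring

theorem one_add_sum_eq_coshSum_add_div (r c : ℝ) (Γ : ℕ) (θ : ℝ) :
    1 + ∑ k ∈ Icc 1 Γ, (∏ l ∈ range k, (r ^ 2 - (l : ℝ) ^ 2)) *
        ((2 * k / c) * cosh (θ / 2) * (2 * sinh (θ / 2)) ^ (2 * k - 1)
          + (2 * sinh (θ / 2)) ^ (2 * k)) / (2 * k).factorial
      = coshSum r Γ θ + coshSumDeriv r Γ θ / c := by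
  rw [coshSum, coshSumDeriv, sum_div, add_assoc, ← sum_add_distrib]
  congr 1
  refine sum_congr rfl fun k _ => ?_
  rw [coshCoeff, delta, mu]
  ring

end PatchCoupling

theorem stmt18_general (r : ℝ) (hr : r ≠ 0) (Γ : ℕ) :
    (fun θ : ℝ =>
        Real.exp (r * θ)
          - (1 + ∑ k ∈ Finset.Icc 1 Γ,
              (∏ l ∈ Finset.range k, (r ^ 2 - (l : ℝ) ^ 2)) *
                ((2 * k / r) * Real.cosh (θ / 2) * (2 * Real.sinh (θ / 2)) ^ (2 * k - 1)
                  + (2 * Real.sinh (θ / 2)) ^ (2 * k)) / ((2 * k).factorial : ℝ)))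
      =O[nhds 0] (fun θ => θ ^ (2 * Γ + 1))
    ∧ (fun θ : ℝ =>
        Real.exp (-(r * θ))
          - (1 + ∑ k ∈ Finset.Icc 1 Γ,
              (∏ l ∈ Finset.range k, (r ^ 2 - (l : ℝ) ^ 2)) *
                (-(2 * k / r) * Real.cosh (θ / 2) * (2 * Real.sinh (θ / 2)) ^ (2 * k - 1)
                  + (2 * Real.sinh (θ / 2)) ^ (2 * k)) / ((2 * k).factorial : ℝ)))
      =O[nhds 0] (fun θ => θ ^ (2 * Γ + 1)) := by
  obtain ⟨hcosh, hsinh⟩ := PatchCoupling.isBigO_cosh_sub_coshSum r Γ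
  have hsum (c : ℝ) := (hcosh.trans (isBigO_pow_pow_of_le (Nat.le_succ _))).add
    (hsinh.const_mul_left c⁻¹)
  -- `-(2k/r) = 2k/(-r)` puts the second sum in the shape of the first, with `-r` for `r`
  simp_rw [← div_neg]
  constructor
  · refine (hsum r).congr_left fun θ => ?_
    rw [PatchCoupling.one_add_sum_eq_coshSum_add_div, ← Real.cosh_add_sinh]
    field_simp
    ring
  · refine (hsum (-r)).congr_left fun θ => ?_
    rw [PatchCoupling.one_add_sum_eq_coshSum_add_div, ← Real.cosh_sub_sinh]
    field_simp
    ring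

/-- Let `r ≠ 0` be real and `Γ ≥ 1` an integer.  With `t = e^θ`,
`δ = t^{1/2} − t^{−1/2} = 2 sinh(θ/2)` and `μ = (t^{1/2} + t^{−1/2})/2 = cosh(θ/2)`, for
each choice of sign, as `θ → 0`,
`t^{±r} = 1 + ∑_{k=1}^{Γ} [∏_{l=0}^{k−1}(r² − l²)]·(±(2k/r) μ δ^{2k−1} + δ^{2k})/(2k)!
          + O(θ^{2Γ+1})`.
In particular, truncating the patch coupling conditions at order `Γ` in the coupling
parameter introduces errors of order `θ^{2Γ+1}`, i.e. of orders `δ̄^{2(Γ+1)}` and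
`μ̄δ̄^{2Γ+1}` in the macroscale operators. -/
theorem stmt18 (r : ℝ) (hr : r ≠ 0) (Γ : ℕ) (hΓ : 1 ≤ Γ) :
    (fun θ : ℝ =>
        Real.exp (r * θ)
          - (1 + ∑ k ∈ Finset.Icc 1 Γ,
              (∏ l ∈ Finset.range k, (r ^ 2 - (l : ℝ) ^ 2)) *
                ((2 * k / r) * Real.cosh (θ / 2) * (2 * Real.sinh (θ / 2)) ^ (2 * k - 1)
                  + (2 * Real.sinh (θ / 2)) ^ (2 * k)) / ((2 * k).factorial : ℝ)))
      =O[nhds 0] (fun θ => θ ^ (2 * Γ + 1))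
    ∧ (fun θ : ℝ =>
        Real.exp (-(r * θ))
          - (1 + ∑ k ∈ Finset.Icc 1 Γ,
              (∏ l ∈ Finset.range k, (r ^ 2 - (l : ℝ) ^ 2)) *
                (-(2 * k / r) * Real.cosh (θ / 2) * (2 * Real.sinh (θ / 2)) ^ (2 * k - 1)
                  + (2 * Real.sinh (θ / 2)) ^ (2 * k)) / ((2 * k).factorial : ℝ)))
      =O[nhds 0] (fun θ => θ ^ (2 * Γ + 1)) :=
  stmt18_general r hr Γ
end
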